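/- arXiv:1512.08092 — 2 statements merged into one kernel-verified Lean document; each statement's English description precedes it below -/
import Mathlib

section
/- Assume the highest root θ is fundamental, let α_θ be the unique simple root with (θ, α_θ) ≠ 0, let S be the set of simple roots adjacent to α_θ, and let I = {γ ∈ Δ⁺ : deg_S(γ) ≥ 2}. Then S(I) = S; equivalently, Π ∖ S(I) = {α_θ} ∪ {β ∈ Π : (β, α_θ) = 0}, so the standard Levi subalgebra of the normaliser of the abelian ideal a(α_θ) has simple roots {α_θ} ∪ {β ∈ Π : (β, α_θ) = 0}. -/
open scoped InnerProductSpace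

/-- An irreducible reduced crystallographic root system, spanning a finite-dimensional
real inner product space, together with a fixed base (set of simple roots) and the
coefficient function expressing each root in the base. -/
structure RootSystemData (V : Type) [NormedAddCommGroup V] [InnerProductSpace ℝ V]
    [FiniteDimensional ℝ V] where
  roots : Set V
  finite : roots.Finite
  nonzero : ∀ γ ∈ roots, γ ≠ 0
  spans : Submodule.span ℝ roots = ⊤
  reflClosed : ∀ α ∈ roots, ∀ β ∈ roots, β - (2 * ⟪β, α⟫_ℝ / ⟪α, α⟫_ℝ) • α ∈ roots
  crystal : ∀ α ∈ roots, ∀ β ∈ roots, ∃ k : ℤ, 2 * ⟪β, α⟫_ℝ / ⟪α, α⟫_ℝ = (k : ℝ)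
  reduced : ∀ α ∈ roots, ∀ t : ℝ, t • α ∈ roots → t = 1 ∨ t = -1
  irred : ∀ A B : Set V, roots = A ∪ B → (∀ a ∈ A, ∀ b ∈ B, ⟪a, b⟫_ℝ = 0) →
    A = ∅ ∨ B = ∅
  simples : Finset V
  simples_sub : ↑simples ⊆ roots
  simples_indep : LinearIndependent ℝ (Subtype.val : {x : V // x ∈ simples} → V)
  coeff : V → V → ℤ
  coeff_spec : ∀ γ ∈ roots, γ = ∑ α ∈ simples, coeff γ α • α
  coeff_sign : ∀ γ ∈ roots, (∀ α ∈ simples, 0 ≤ coeff γ α) ∨ (∀ α ∈ simples, coeff γ α ≤ 0)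

namespace RootSystemData

variable {V : Type} [NormedAddCommGroup V] [InnerProductSpace ℝ V] [FiniteDimensional ℝ V]
variable (R : RootSystemData V)

/-- The set of positive roots `Δ⁺` (w.r.t. the base `simples`). -/
def posRoots : Set V := {γ | γ ∈ R.roots ∧ ∀ α ∈ R.simples, 0 ≤ R.coeff γ α}

/-- The partial order `μ ≼ ν`: `ν - μ` is a nonnegative integral combination of simple roots. -/
def rle (μ ν : V) : Prop := ∃ c : V → ℕ, ν - μ = ∑ α ∈ R.simples, (c α : ℤ) • α

/-- `θ` is the highest root. -/
def IsHighest (θ : V) : Prop := θ ∈ R.posRoots ∧ ∀ γ ∈ R.roots, R.rle γ θ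

/-- `γ` is a long root: a root of maximal length. -/
def IsLong (γ : V) : Prop := γ ∈ R.roots ∧ ∀ γ' ∈ R.roots, ‖γ'‖ ≤ ‖γ‖

/-- `I` is an upper ideal of `(Δ⁺, ≼)`. -/
def IsUpperIdeal (I : Set V) : Prop :=
  I ⊆ R.posRoots ∧ ∀ ν ∈ I, ∀ γ ∈ R.posRoots, R.rle ν γ → γ ∈ I

/-- `I` is an abelian upper ideal of `(Δ⁺, ≼)`. -/
def IsAbelianIdeal (I : Set V) : Prop :=
  R.IsUpperIdeal I ∧ ∀ γ₁ ∈ I, ∀ γ₂ ∈ I, γ₁ + γ₂ ∉ R.roots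

/-- The set of minimal elements of `M ⊆ Δ⁺` w.r.t. `≼`. -/
def minSet (M : Set V) : Set V := {γ | γ ∈ M ∧ ∀ ν ∈ M, R.rle ν γ → ν = γ}

/-- The set of maximal elements of `M ⊆ Δ⁺` w.r.t. `≼`. -/
def maxSet (M : Set V) : Set V := {γ | γ ∈ M ∧ ∀ ν ∈ M, R.rle γ ν → ν = γ}

/-- `S(I) = {α ∈ Π : ∃ γ ∈ min(I), γ - α ∈ Δ⁺ ∪ {0}}`; the complement `Π ∖ S(I)` is the
set of simple roots of the standard Levi subalgebra of the normaliser of the ideal `I`. -/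
def normS (I : Set V) : Set V :=
  {α | α ∈ R.simples ∧ ∃ γ ∈ R.minSet I, (γ - α ∈ R.posRoots ∨ γ = α)}

/-- `H = {γ ∈ Δ⁺ : (γ, θ) ≠ 0}`. -/
def Hset (θ : V) : Set V := {γ | γ ∈ R.posRoots ∧ ⟪γ, θ⟫_ℝ ≠ 0}

/-- `deg_S(γ) = Σ_{α ∈ S} [γ:α]`. -/
def degS (S : Finset V) (γ : V) : ℤ := ∑ α ∈ S, R.coeff γ α

/-- `I_S = {γ ∈ Δ⁺ : deg_S(γ) ≥ ⌊d(S)/2⌋ + 1}`, where `d(S) = deg_S(θ)`: the abelian ideal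
`g(≥ ⌊hot(p)/2⌋ + 1)` associated with the standard parabolic subalgebra `p(S)`. -/
def idealS (S : Finset V) (θ : V) : Set V :=
  {γ | γ ∈ R.posRoots ∧ R.degS S θ / 2 + 1 ≤ R.degS S γ}

/-- The highest root `θ` is fundamental with `α_θ` the unique simple root not
orthogonal to `θ`, and `(θ, α_θ∨) = 1`. -/
def IsFundamental (θ αθ : V) : Prop :=
  αθ ∈ R.simples ∧ ⟪θ, αθ⟫_ℝ ≠ 0 ∧ (∀ β ∈ R.simples, ⟪θ, β⟫_ℝ ≠ 0 → β = αθ) ∧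
    2 * ⟪θ, αθ⟫_ℝ / ⟪αθ, αθ⟫_ℝ = 1

end RootSystemData

/-- The reflection `s_α`. -/
noncomputable def rsRefl {V : Type} [NormedAddCommGroup V] [InnerProductSpace ℝ V] (α x : V) : V :=
  x - (2 * ⟪x, α⟫_ℝ / ⟪α, α⟫_ℝ) • α

/-- The element of the Weyl group given by the word `l = [α₁, …, α_m]`,
namely `s_{α₁} ∘ ⋯ ∘ s_{α_m}`; its inverse is `wordMap l.reverse`. -/
noncomputable def wordMap {V : Type} [NormedAddCommGroup V] [InnerProductSpace ℝ V] (l : List V) : V → V :=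
  l.foldr (fun α f => rsRefl α ∘ f) id

namespace RootSystemData

variable {V : Type} [NormedAddCommGroup V] [InnerProductSpace ℝ V] [FiniteDimensional ℝ V]
variable (R : RootSystemData V)

lemma coeff_unique {f g : V → ℤ}
    (h : ∑ α ∈ R.simples, f α • α = ∑ α ∈ R.simples, g α • α) :
    ∀ α ∈ R.simples, f α = g α := by
  intro α hα
  have h0 : ∑ x ∈ R.simples.attach, ((f x.1 - g x.1 : ℤ) : ℝ) • (x.1 : V) = 0 := by
    rw [← Finset.sum_attach R.simples fun a => f a • a,
        ← Finset.sum_attach R.simples fun a => g a • a] at h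
    have e : ∑ x ∈ R.simples.attach, ((f x.1 - g x.1 : ℤ) : ℝ) • (x.1 : V)
        = ∑ x ∈ R.simples.attach, (f x.1 • (x.1 : V) - g x.1 • (x.1 : V)) := by
      refine Finset.sum_congr rfl fun x _ => ?_
      rw [Int.cast_smul_eq_zsmul, sub_smul]
    rw [e, Finset.sum_sub_distrib, h, sub_self]
  have h1 := linearIndependent_iff'.mp R.simples_indep R.simples.attach
      (fun x => ((f x.1 - g x.1 : ℤ) : ℝ)) h0 ⟨α, hα⟩ (Finset.mem_attach _ _)
  have h2 : ((f α - g α : ℤ) : ℝ) = 0 := h1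
  have h3 : (f α - g α : ℤ) = 0 := by exact_mod_cast h2
  omega

/-- If a root has an explicit integral representation, its coefficients are given by it. -/
lemma coeff_eq {γ : V} (hγ : γ ∈ R.roots) {f : V → ℤ}
    (h : γ = ∑ α ∈ R.simples, f α • α) :
    ∀ α ∈ R.simples, R.coeff γ α = f α :=
  R.coeff_unique ((R.coeff_spec γ hγ).symm.trans h)

lemma simple_mem_roots {α : V} (hα : α ∈ R.simples) : α ∈ R.roots :=
  R.simples_sub hα

open scoped Classical in
lemma coeff_simple {α : V} (hα : α ∈ R.simples) :
    ∀ β ∈ R.simples, R.coeff α β = if β = α then 1 else 0 := by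
  refine R.coeff_eq (R.simple_mem_roots hα) ?_
  simp [ite_smul, Finset.sum_ite_eq', hα]

lemma inner_self_pos' {γ : V} (hγ : γ ∈ R.roots) : 0 < ⟪γ, γ⟫_ℝ :=
  lt_of_le_of_ne real_inner_self_nonneg
    (Ne.symm (inner_self_ne_zero.mpr (R.nonzero γ hγ)))

lemma neg_mem {γ : V} (hγ : γ ∈ R.roots) : -γ ∈ R.roots := by
  have h := R.reflClosed γ hγ γ hγ
  have hne : ⟪γ, γ⟫_ℝ ≠ 0 := ne_of_gt (R.inner_self_pos' hγ)
  have : 2 * ⟪γ, γ⟫_ℝ / ⟪γ, γ⟫_ℝ = 2 := by field_simp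
  rw [this] at h
  have e : γ - (2:ℝ) • γ = -γ := by
    rw [two_smul]; abel
  rwa [e] at h

lemma coeff_neg {γ : V} (hγ : γ ∈ R.roots) :
    ∀ β ∈ R.simples, R.coeff (-γ) β = - R.coeff γ β := by
  refine R.coeff_eq (R.neg_mem hγ) ?_
  have e : ∑ β ∈ R.simples, (- R.coeff γ β) • β = -γ := by
    rw [Finset.sum_congr rfl fun β _ => neg_smul (R.coeff γ β) β,
      Finset.sum_neg_distrib, ← R.coeff_spec γ hγ]
  exact e.symm

/-- Crystallographic pairing as an integer identity. -/
lemma pair_int {x y : V} (hx : x ∈ R.roots) (hy : y ∈ R.roots) :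
    ∃ k : ℤ, 2 * ⟪x, y⟫_ℝ = (k : ℝ) * ⟪y, y⟫_ℝ := by
  obtain ⟨k, hk⟩ := R.crystal y hy x hx
  refine ⟨k, ?_⟩
  have hne : ⟪y, y⟫_ℝ ≠ 0 := ne_of_gt (R.inner_self_pos' hy)
  field_simp at hk
  linarith [hk]

/-- Integer reflection: if `2⟪x,y⟫ = k⟪y,y⟫` then `x - k • y` is a root. -/
lemma refl_mem {x y : V} (hx : x ∈ R.roots) (hy : y ∈ R.roots) {k : ℤ}
    (hk : 2 * ⟪x, y⟫_ℝ = (k : ℝ) * ⟪y, y⟫_ℝ) : x - k • y ∈ R.roots := by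
  have h := R.reflClosed y hy x hx
  have hne : ⟪y, y⟫_ℝ ≠ 0 := ne_of_gt (R.inner_self_pos' hy)
  have e : 2 * ⟪x, y⟫_ℝ / ⟪y, y⟫_ℝ = (k : ℝ) := by
    rw [hk]; field_simp
  rw [e, Int.cast_smul_eq_zsmul] at h
  exact h

lemma coeff_add {x y : V} (hx : x ∈ R.roots) (hy : y ∈ R.roots) (hxy : x + y ∈ R.roots) :
    ∀ β ∈ R.simples, R.coeff (x + y) β = R.coeff x β + R.coeff y β := by
  refine R.coeff_eq hxy ?_
  have e : ∑ β ∈ R.simples, (R.coeff x β + R.coeff y β) • β = x + y := by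
    rw [Finset.sum_congr rfl fun β _ => add_smul (R.coeff x β) (R.coeff y β) β,
      Finset.sum_add_distrib, ← R.coeff_spec x hx, ← R.coeff_spec y hy]
  exact e.symm

lemma coeff_sub {x y : V} (hx : x ∈ R.roots) (hy : y ∈ R.roots) (hxy : x - y ∈ R.roots) :
    ∀ β ∈ R.simples, R.coeff (x - y) β = R.coeff x β - R.coeff y β := by
  refine R.coeff_eq hxy ?_
  have e : ∑ β ∈ R.simples, (R.coeff x β - R.coeff y β) • β = x - y := by
    rw [Finset.sum_congr rfl fun β _ => sub_smul (R.coeff x β) (R.coeff y β) β,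
      Finset.sum_sub_distrib, ← R.coeff_spec x hx, ← R.coeff_spec y hy]
  exact e.symm

lemma coeff_smul_sub {x y : V} (hx : x ∈ R.roots) (hy : y ∈ R.roots) {c : ℤ}
    (hxy : c • x - y ∈ R.roots) :
    ∀ β ∈ R.simples, R.coeff (c • x - y) β = c * R.coeff x β - R.coeff y β := by
  refine R.coeff_eq hxy ?_
  have t : ∀ β ∈ R.simples, (c * R.coeff x β - R.coeff y β) • β
      = c • (R.coeff x β • β) - R.coeff y β • β := by
    intro β _; rw [sub_smul, mul_smul]
  have e : ∑ β ∈ R.simples, (c * R.coeff x β - R.coeff y β) • β = c • x - y := by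
    rw [Finset.sum_congr rfl t, Finset.sum_sub_distrib, ← Finset.smul_sum,
      ← R.coeff_spec x hx, ← R.coeff_spec y hy]
  exact e.symm

lemma mem_posRoots {γ : V} :
    γ ∈ R.posRoots ↔ γ ∈ R.roots ∧ ∀ α ∈ R.simples, 0 ≤ R.coeff γ α := Iff.rfl

lemma pos_of_coeff_pos {γ β : V} (hγ : γ ∈ R.roots) (hβ : β ∈ R.simples)
    (h : 0 < R.coeff γ β) : γ ∈ R.posRoots :=
  ⟨hγ, (R.coeff_sign γ hγ).resolve_right fun hneg => absurd (hneg β hβ) (by omega)⟩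

lemma inner_expand {γ : V} (hγ : γ ∈ R.roots) (x : V) :
    ⟪γ, x⟫_ℝ = ∑ β ∈ R.simples, (R.coeff γ β : ℝ) * ⟪β, x⟫_ℝ := by
  conv_lhs => rw [R.coeff_spec γ hγ]
  rw [sum_inner]
  refine Finset.sum_congr rfl fun β _ => ?_
  rw [← Int.cast_smul_eq_zsmul ℝ, real_inner_smul_left]

lemma sub_repr {x y : V} (hx : x ∈ R.roots) (hy : y ∈ R.roots) :
    x - y = ∑ β ∈ R.simples, (R.coeff x β - R.coeff y β) • β := by
  rw [Finset.sum_congr rfl fun β _ => sub_smul (R.coeff x β) (R.coeff y β) β,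
    Finset.sum_sub_distrib, ← R.coeff_spec x hx, ← R.coeff_spec y hy]

lemma inner_sub_expand {x y : V} (hx : x ∈ R.roots) (hy : y ∈ R.roots) (z : V) :
    ⟪x - y, z⟫_ℝ = ∑ β ∈ R.simples, ((R.coeff x β - R.coeff y β : ℤ) : ℝ) * ⟪β, z⟫_ℝ := by
  conv_lhs => rw [R.sub_repr hx hy]
  rw [sum_inner]
  refine Finset.sum_congr rfl fun β _ => ?_
  rw [← Int.cast_smul_eq_zsmul ℝ, real_inner_smul_left]

lemma root_sub_mem {x y : V} (hx : x ∈ R.roots) (hy : y ∈ R.roots)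
    (hpos : 0 < ⟪x, y⟫_ℝ) (hne : x ≠ y) : x - y ∈ R.roots := by
  obtain ⟨k, hk⟩ := R.pair_int hx hy
  obtain ⟨l, hl⟩ := R.pair_int hy hx
  have hyy := R.inner_self_pos' hy
  have hxx := R.inner_self_pos' hx
  have hcomm : ⟪y, x⟫_ℝ = ⟪x, y⟫_ℝ := (real_inner_comm y x).symm
  have hl' : 2 * ⟪x, y⟫_ℝ = (l : ℝ) * ⟪x, x⟫_ℝ := by rw [← hcomm]; exact hl
  have hk1 : 1 ≤ k := by
    have h0 : 0 < (k : ℝ) := by nlinarith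
    exact_mod_cast h0
  have hl1 : 1 ≤ l := by
    have h0 : 0 < (l : ℝ) := by nlinarith [hl']
    exact_mod_cast h0
  by_cases hk2 : k = 1
  · have h2 := R.refl_mem hx hy hk
    rw [hk2] at h2; simpa using h2
  by_cases hl2 : l = 1
  · have h2 := R.refl_mem hy hx hl
    rw [hl2] at h2
    simp only [one_smul] at h2
    have h3 := R.neg_mem h2
    simpa using h3
  exfalso
  have hk2' : 2 ≤ k := by omega
  have hl2' : 2 ≤ l := by omega
  have cs := real_inner_mul_inner_self_le x y
  have key : (2 * ⟪x, y⟫_ℝ) * (2 * ⟪x, y⟫_ℝ) = ((k : ℝ) * ⟪y, y⟫_ℝ) * ((l : ℝ) * ⟪x, x⟫_ℝ) := by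
    rw [← hk, ← hl']
  have hkl4 : (k : ℝ) * l ≤ 4 := by nlinarith [key, cs, mul_pos hyy hxx]
  have hkl4' : k * l ≤ 4 := by exact_mod_cast hkl4
  have hkk : k = 2 := by nlinarith
  have hll : l = 2 := by nlinarith
  rw [hkk] at hk; rw [hll] at hl'
  push_cast at hk hl'
  have hz : ⟪x - y, x - y⟫_ℝ = 0 := by
    rw [real_inner_sub_sub_self]; linarith
  exact hne (sub_eq_zero.mp (inner_self_eq_zero.mp hz))

lemma root_add_mem {x y : V} (hx : x ∈ R.roots) (hy : y ∈ R.roots)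
    (hneg : ⟪x, y⟫_ℝ < 0) (hne : x ≠ -y) : x + y ∈ R.roots := by
  have h := R.root_sub_mem hx (R.neg_mem hy) (by rw [inner_neg_right]; linarith) hne
  simpa using h

open scoped Classical in
lemma simple_ne_neg {α β : V} (hα : α ∈ R.simples) (hβ : β ∈ R.simples) : α ≠ -β := by
  intro h
  have h4 : R.coeff α α = R.coeff (-β) α := by rw [← h]
  rw [R.coeff_neg (R.simple_mem_roots hβ) α hα, R.coeff_simple hβ α hα] at h4
  have h5 := R.coeff_simple hα α hα
  simp only [if_pos rfl] at h5
  rw [h5] at h4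
  by_cases hab : α = β <;> simp [hab] at h4

lemma pos_ne_neg_simple {γ β : V} (hγ : γ ∈ R.posRoots) (hβ : β ∈ R.simples) : γ ≠ -β := by
  intro h
  have h1 := hγ.2 β hβ
  have h2 : R.coeff γ β = - R.coeff β β := by
    rw [h]; exact R.coeff_neg (R.simple_mem_roots hβ) β hβ
  have h3 : R.coeff β β = 1 := by
    have h5 := R.coeff_simple hβ β hβ; simpa using h5
  omega

open scoped Classical in
lemma simple_inner_nonpos {α β : V} (hα : α ∈ R.simples) (hβ : β ∈ R.simples) (hne : α ≠ β) :
    ⟪α, β⟫_ℝ ≤ 0 := by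
  by_contra h
  push_neg at h
  have hr := R.root_sub_mem (R.simple_mem_roots hα) (R.simple_mem_roots hβ) h hne
  have hc := R.coeff_sub (R.simple_mem_roots hα) (R.simple_mem_roots hβ) hr
  have hcα : R.coeff (α - β) α = 1 := by
    rw [hc α hα, R.coeff_simple hα α hα, R.coeff_simple hβ α hα]
    simp [hne]
  have hcβ : R.coeff (α - β) β = -1 := by
    rw [hc β hβ, R.coeff_simple hα β hβ, R.coeff_simple hβ β hβ]
    simp [Ne.symm hne]
  rcases R.coeff_sign _ hr with hs | hs
  · have := hs β hβ; omega
  · have := hs α hα; omega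

open scoped Classical in
lemma pos_le_simple {ν β : V} (hν : ν ∈ R.posRoots) (hβ : β ∈ R.simples)
    (hle : ∀ α' ∈ R.simples, R.coeff ν α' ≤ R.coeff β α') : ν = β := by
  have hall : ∀ α' ∈ R.simples, R.coeff ν α' = if α' = β then R.coeff ν β else 0 := by
    intro α' hα'
    have h1 := hle α' hα'
    rw [R.coeff_simple hβ α' hα'] at h1
    have h2 := hν.2 α' hα'
    by_cases hb : α' = β
    · simp [hb]
    · simp [hb] at h1 ⊢; omega
  have h0 := R.coeff_spec ν hν.1
  rw [Finset.sum_congr rfl (fun α' hα' => by rw [hall α' hα'])] at h0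
  have h1 : ν = R.coeff ν β • β := by
    conv_lhs => rw [h0]
    simp [ite_smul, Finset.sum_ite_eq', hβ]
  have h2 : R.coeff ν β = 0 ∨ R.coeff ν β = 1 := by
    have h4 := hν.2 β hβ
    have h3 := hle β hβ
    rw [R.coeff_simple hβ β hβ] at h3
    simp only [if_pos rfl] at h3
    omega
  rcases h2 with h2 | h2
  · rw [h2] at h1; simp at h1; exact absurd h1 (R.nonzero ν hν.1)
  · rw [h2] at h1; simpa using h1

open scoped Classical in
lemma pos_sub_simple {γ α : V} (hγ : γ ∈ R.posRoots) (hα : α ∈ R.simples)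
    (hr : γ - α ∈ R.roots) (hne : γ ≠ α) : γ - α ∈ R.posRoots := by
  have hc := R.coeff_sub hγ.1 (R.simple_mem_roots hα) hr
  rcases R.coeff_sign _ hr with hs | hs
  · exact ⟨hr, hs⟩
  · exfalso
    have hle : ∀ α' ∈ R.simples, R.coeff γ α' ≤ R.coeff α α' := by
      intro α' hα'
      have h1 := hs α' hα'
      rw [hc α' hα'] at h1
      omega
    exact hne (R.pos_le_simple hγ hα hle)

lemma pos_add_simple {γ α : V} (hγ : γ ∈ R.posRoots) (hα : α ∈ R.simples)
    (hr : γ + α ∈ R.roots) : γ + α ∈ R.posRoots := by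
  refine ⟨hr, fun β hβ => ?_⟩
  rw [R.coeff_add hγ.1 (R.simple_mem_roots hα) hr β hβ, R.coeff_simple hα β hβ]
  have h1 := hγ.2 β hβ
  by_cases hb : β = α
  · rw [if_pos hb]; omega
  · rw [if_neg hb]; omega

lemma eq_of_coeff_eq {x y : V} (hx : x ∈ R.roots) (hy : y ∈ R.roots)
    (h : ∀ β ∈ R.simples, R.coeff x β = R.coeff y β) : x = y := by
  have e : x = ∑ β ∈ R.simples, R.coeff y β • β := by
    conv_lhs => rw [R.coeff_spec x hx]
    exact Finset.sum_congr rfl fun β hβ => by rw [h β hβ]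
  rw [e, ← R.coeff_spec y hy]

lemma coeff_le_of_rle {x y : V} (hx : x ∈ R.roots) (hy : y ∈ R.roots) (h : R.rle x y) :
    ∀ β ∈ R.simples, R.coeff x β ≤ R.coeff y β := by
  obtain ⟨c, hc⟩ := h
  have e : y = ∑ β ∈ R.simples, (R.coeff x β + (c β : ℤ)) • β := by
    calc y = x + (y - x) := by abel
    _ = x + ∑ β ∈ R.simples, (c β : ℤ) • β := by rw [hc]
    _ = ∑ β ∈ R.simples, (R.coeff x β + (c β : ℤ)) • β := by
        rw [Finset.sum_congr rfl fun β _ => add_smul (R.coeff x β) ((c β : ℤ)) β,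
          Finset.sum_add_distrib, ← R.coeff_spec x hx]
  intro β hβ
  have h1 := R.coeff_eq hy e β hβ
  have hc0 : (0 : ℤ) ≤ (c β : ℤ) := Int.ofNat_nonneg _
  omega

lemma rle_of_coeff_le {x y : V} (hx : x ∈ R.roots) (hy : y ∈ R.roots)
    (h : ∀ β ∈ R.simples, R.coeff x β ≤ R.coeff y β) : R.rle x y := by
  refine ⟨fun β => (R.coeff y β - R.coeff x β).toNat, ?_⟩
  rw [R.sub_repr hy hx]
  refine Finset.sum_congr rfl fun β hβ => ?_
  have h1 : ((R.coeff y β - R.coeff x β).toNat : ℤ) = R.coeff y β - R.coeff x β :=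
    Int.toNat_of_nonneg (by have := h β hβ; omega)
  show (R.coeff y β - R.coeff x β) • β = ((R.coeff y β - R.coeff x β).toNat : ℤ) • β
  rw [h1]

/-- The height of a root. -/
def ht (γ : V) : ℤ := ∑ β ∈ R.simples, R.coeff γ β

lemma ht_lt {x y : V} (hx : x ∈ R.roots) (hy : y ∈ R.roots)
    (hle : ∀ β ∈ R.simples, R.coeff x β ≤ R.coeff y β) (hne : x ≠ y) : R.ht x < R.ht y := by
  have hex : ∃ β ∈ R.simples, R.coeff x β < R.coeff y β := by
    by_contra hall
    push_neg at hall
    exact hne (R.eq_of_coeff_eq hx hy fun β hβ => le_antisymm (hle β hβ) (hall β hβ))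
  obtain ⟨β, hβ, hlt⟩ := hex
  exact Finset.sum_lt_sum hle ⟨β, hβ, hlt⟩

lemma chain_aux (n : ℕ) : ∀ ν γ : V, ν ∈ R.posRoots → γ ∈ R.posRoots →
    (∀ β ∈ R.simples, R.coeff ν β ≤ R.coeff γ β) → ν ≠ γ →
    (R.ht γ - R.ht ν).toNat ≤ n →
    ∃ β ∈ R.simples, γ - β ∈ R.posRoots ∧
      ∀ α' ∈ R.simples, R.coeff ν α' ≤ R.coeff (γ - β) α' := by
  classical
  induction n with
  | zero =>
    intro ν γ hν hγ hle hne hm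
    have := R.ht_lt hν.1 hγ.1 hle hne
    omega
  | succ n ih =>
    intro ν γ hν hγ hle hne hm
    have hsubne : γ - ν ≠ 0 := sub_ne_zero.mpr (Ne.symm hne)
    have hsub : 0 < ⟪γ - ν, γ - ν⟫_ℝ :=
      lt_of_le_of_ne real_inner_self_nonneg (Ne.symm (inner_self_ne_zero.mpr hsubne))
    have hsplit : 0 < ⟪γ - ν, γ⟫_ℝ ∨ ⟪γ - ν, ν⟫_ℝ < 0 := by
      by_contra hcon
      push_neg at hcon
      have e : ⟪γ - ν, γ - ν⟫_ℝ = ⟪γ - ν, γ⟫_ℝ - ⟪γ - ν, ν⟫_ℝ := inner_sub_right _ _ _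
      rw [e] at hsub
      linarith [hcon.1, hcon.2]
    rcases hsplit with hcase | hcase
    · have hex : ∃ β ∈ R.simples, R.coeff ν β < R.coeff γ β ∧ 0 < ⟪β, γ⟫_ℝ := by
        by_contra hcon
        push_neg at hcon
        rw [R.inner_sub_expand hγ.1 hν.1 γ] at hcase
        have hterm : ∀ β ∈ R.simples, ((R.coeff γ β - R.coeff ν β : ℤ) : ℝ) * ⟪β, γ⟫_ℝ ≤ 0 := by
          intro β hβ
          rcases lt_or_ge (R.coeff ν β) (R.coeff γ β) with h1 | h1
          · have h2 := hcon β hβ h1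
            have h3 : (0:ℝ) ≤ ((R.coeff γ β - R.coeff ν β : ℤ) : ℝ) := by
              have := hle β hβ
              have h4 : (0:ℤ) ≤ R.coeff γ β - R.coeff ν β := by omega
              exact_mod_cast h4
            exact mul_nonpos_iff.mpr (Or.inl ⟨h3, h2⟩)
          · have h2 : R.coeff γ β - R.coeff ν β = 0 := by have := hle β hβ; omega
            rw [h2]; simp
        have := Finset.sum_nonpos hterm
        linarith
      obtain ⟨β, hβ, hd, hip⟩ := hex
      have hγβ : γ ≠ β := by
        intro h
        have h2 := R.pos_le_simple hν hβ (by rw [← h]; exact hle)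
        exact hne (h2.trans h.symm)
      have hroot : γ - β ∈ R.roots :=
        R.root_sub_mem hγ.1 (R.simple_mem_roots hβ) (by rw [real_inner_comm]; exact hip) hγβ
      have hpos := R.pos_sub_simple hγ hβ hroot hγβ
      refine ⟨β, hβ, hpos, fun α' hα' => ?_⟩
      rw [R.coeff_sub hγ.1 (R.simple_mem_roots hβ) hroot α' hα', R.coeff_simple hβ α' hα']
      by_cases hb : α' = β
      · subst hb; simp only [if_pos rfl]; omega
      · simp only [hb, if_false]; have := hle α' hα'; omega
    · have hex : ∃ β ∈ R.simples, R.coeff ν β < R.coeff γ β ∧ ⟪β, ν⟫_ℝ < 0 := by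
        by_contra hcon
        push_neg at hcon
        rw [R.inner_sub_expand hγ.1 hν.1 ν] at hcase
        have hterm : ∀ β ∈ R.simples, 0 ≤ ((R.coeff γ β - R.coeff ν β : ℤ) : ℝ) * ⟪β, ν⟫_ℝ := by
          intro β hβ
          rcases lt_or_ge (R.coeff ν β) (R.coeff γ β) with h1 | h1
          · have h2 := hcon β hβ h1
            have h3 : (0:ℝ) ≤ ((R.coeff γ β - R.coeff ν β : ℤ) : ℝ) := by
              have := hle β hβ
              have h4 : (0:ℤ) ≤ R.coeff γ β - R.coeff ν β := by omega
              exact_mod_cast h4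
            exact mul_nonneg h3 h2
          · have h2 : R.coeff γ β - R.coeff ν β = 0 := by have := hle β hβ; omega
            rw [h2]; simp
        have := Finset.sum_nonneg hterm
        linarith
      obtain ⟨β, hβ, hd, hip⟩ := hex
      have hνβ : ν + β ∈ R.roots := R.root_add_mem hν.1 (R.simple_mem_roots hβ)
        (by rw [real_inner_comm]; exact hip) (R.pos_ne_neg_simple hν hβ)
      have hνβpos := R.pos_add_simple hν hβ hνβ
      have hcle : ∀ α' ∈ R.simples, R.coeff (ν + β) α' ≤ R.coeff γ α' := by
        intro α' hα'
        rw [R.coeff_add hν.1 (R.simple_mem_roots hβ) hνβ α' hα', R.coeff_simple hβ α' hα']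
        by_cases hb : α' = β
        · subst hb; simp only [if_pos rfl]; omega
        · simp only [hb, if_false]; have := hle α' hα'; omega
      by_cases heq : ν + β = γ
      · have hswap : γ - β = ν := by rw [← heq]; abel
        exact ⟨β, hβ, by rw [hswap]; exact hν, fun α' hα' => by rw [hswap]⟩
      · have h2 : R.ht (ν + β) = R.ht ν + 1 := by
          unfold RootSystemData.ht
          rw [Finset.sum_congr rfl (fun α' hα' =>
            R.coeff_add hν.1 (R.simple_mem_roots hβ) hνβ α' hα'), Finset.sum_add_distrib]
          congr 1
          rw [Finset.sum_congr rfl (fun α' hα' => R.coeff_simple hβ α' hα'),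
            Finset.sum_ite_eq' R.simples β fun _ => (1:ℤ), if_pos hβ]
        have h1 := R.ht_lt hν.1 hγ.1 hle hne
        obtain ⟨β', hβ', hpos', hle'⟩ := ih (ν + β) γ hνβpos hγ hcle heq (by omega)
        refine ⟨β', hβ', hpos', fun α' hα' => le_trans ?_ (hle' α' hα')⟩
        rw [R.coeff_add hν.1 (R.simple_mem_roots hβ) hνβ α' hα', R.coeff_simple hβ α' hα']
        by_cases hb : α' = β
        · rw [if_pos hb]; omega
        · rw [if_neg hb]; omega

open scoped Classical in
lemma coeff_sub_zsmul_simple {γ β : V} (hγ : γ ∈ R.roots) (hβ : β ∈ R.simples) {k : ℤ}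
    (hr : γ - k • β ∈ R.roots) :
    ∀ β' ∈ R.simples, R.coeff (γ - k • β) β'
      = R.coeff γ β' - k * (if β' = β then 1 else 0) := by
  refine R.coeff_eq hr ?_
  have t : ∀ β' ∈ R.simples, (R.coeff γ β' - k * (if β' = β then 1 else 0)) • β'
      = R.coeff γ β' • β' - k • ((if β' = β then (1:ℤ) else 0) • β') := by
    intro β' _; rw [sub_smul, mul_smul]
  rw [Finset.sum_congr rfl t, Finset.sum_sub_distrib, ← Finset.smul_sum, ← R.coeff_spec γ hγ]
  congr 2
  simp [ite_smul, Finset.sum_ite_eq', hβ]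

open scoped Classical in
lemma ht_sub_zsmul_simple {γ β : V} (hγ : γ ∈ R.roots) (hβ : β ∈ R.simples) {k : ℤ}
    (hr : γ - k • β ∈ R.roots) : R.ht (γ - k • β) = R.ht γ - k := by
  unfold RootSystemData.ht
  rw [Finset.sum_congr rfl (R.coeff_sub_zsmul_simple hγ hβ hr), Finset.sum_sub_distrib]
  congr 1
  rw [← Finset.mul_sum, Finset.sum_ite_eq' R.simples β (fun _ => (1:ℤ)), if_pos hβ, mul_one]

lemma ht_le_theta {θ : V} (hθ : R.IsHighest θ) {γ : V} (hγ : γ ∈ R.roots) :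
    R.ht γ ≤ R.ht θ :=
  Finset.sum_le_sum (R.coeff_le_of_rle hγ hθ.1.1 (hθ.2 γ hγ))

lemma exists_dominant_aux {θ : V} (hθ : R.IsHighest θ) (n : ℕ) :
    ∀ γ ∈ R.roots, (R.ht θ - R.ht γ).toNat ≤ n →
    ∃ γ' ∈ R.roots, ⟪γ', γ'⟫_ℝ = ⟪γ, γ⟫_ℝ ∧ ∀ β ∈ R.simples, 0 ≤ ⟪γ', β⟫_ℝ := by
  induction n with
  | zero =>
    intro γ hγ hm
    by_cases hdom : ∀ β ∈ R.simples, 0 ≤ ⟪γ, β⟫_ℝ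
    · exact ⟨γ, hγ, rfl, hdom⟩
    · exfalso
      push_neg at hdom
      obtain ⟨β, hβ, hlt⟩ := hdom
      obtain ⟨k, hk⟩ := R.pair_int hγ (R.simple_mem_roots hβ)
      have hββ := R.inner_self_pos' (R.simple_mem_roots hβ)
      have hkneg : k ≤ -1 := by
        have h0 : (k:ℝ) < 0 := by nlinarith
        have h1 : k < 0 := by exact_mod_cast h0
        omega
      have hroot := R.refl_mem hγ (R.simple_mem_roots hβ) hk
      have h1 := R.ht_le_theta hθ hroot
      have h2 := R.ht_sub_zsmul_simple hγ hβ hroot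
      omega
  | succ n ih =>
    intro γ hγ hm
    by_cases hdom : ∀ β ∈ R.simples, 0 ≤ ⟪γ, β⟫_ℝ
    · exact ⟨γ, hγ, rfl, hdom⟩
    · push_neg at hdom
      obtain ⟨β, hβ, hlt⟩ := hdom
      obtain ⟨k, hk⟩ := R.pair_int hγ (R.simple_mem_roots hβ)
      have hββ := R.inner_self_pos' (R.simple_mem_roots hβ)
      have hkneg : k ≤ -1 := by
        have h0 : (k:ℝ) < 0 := by nlinarith
        have h1 : k < 0 := by exact_mod_cast h0
        omega
      have hroot := R.refl_mem hγ (R.simple_mem_roots hβ) hk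
      have h1 := R.ht_le_theta hθ hroot
      have h2 := R.ht_sub_zsmul_simple hγ hβ hroot
      have hnorm : ⟪γ - k • β, γ - k • β⟫_ℝ = ⟪γ, γ⟫_ℝ := by
        have hsm : ⟪γ, (k:ℤ) • β⟫_ℝ = (k:ℝ) * ⟪γ, β⟫_ℝ := by
          rw [← Int.cast_smul_eq_zsmul ℝ, real_inner_smul_right]
        have hsm2 : ⟪(k:ℤ) • β, (k:ℤ) • β⟫_ℝ = (k:ℝ) * ((k:ℝ) * ⟪β, β⟫_ℝ) := by
          rw [← Int.cast_smul_eq_zsmul ℝ, real_inner_smul_left, real_inner_smul_right]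
        rw [real_inner_sub_sub_self, hsm, hsm2]
        nlinarith [hk]
      obtain ⟨γ', hγ', hn', hd'⟩ := ih (γ - k • β) hroot (by omega)
      exact ⟨γ', hγ', by rw [hn', hnorm], hd'⟩

lemma root_norm_le {θ : V} (hθ : R.IsHighest θ) {γ : V} (hγ : γ ∈ R.roots) :
    ⟪γ, γ⟫_ℝ ≤ ⟪θ, θ⟫_ℝ := by
  obtain ⟨γ', hγ', hnorm, hdom⟩ := R.exists_dominant_aux hθ (R.ht θ - R.ht γ).toNat γ hγ le_rfl
  have h1 : 0 ≤ ⟪θ - γ', γ'⟫_ℝ := by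
    rw [R.inner_sub_expand hθ.1.1 hγ' γ']
    apply Finset.sum_nonneg
    intro β hβ
    apply mul_nonneg
    · have := R.coeff_le_of_rle hγ' hθ.1.1 (hθ.2 γ' hγ') β hβ
      have h4 : (0:ℤ) ≤ R.coeff θ β - R.coeff γ' β := by omega
      exact_mod_cast h4
    · rw [real_inner_comm]; exact hdom β hβ
  have h2 : ⟪γ', γ'⟫_ℝ ≤ ⟪θ, γ'⟫_ℝ := by rw [inner_sub_left] at h1; linarith
  have h3 : 0 < ⟪γ', γ'⟫_ℝ := R.inner_self_pos' hγ'
  have cs := real_inner_mul_inner_self_le θ γ'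
  have h4 : ⟪γ', γ'⟫_ℝ * ⟪γ', γ'⟫_ℝ ≤ ⟪θ, γ'⟫_ℝ * ⟪θ, γ'⟫_ℝ :=
    mul_self_le_mul_self (le_of_lt h3) h2
  have h5 : ⟪γ', γ'⟫_ℝ ≤ ⟪θ, θ⟫_ℝ :=
    le_of_mul_le_mul_right (by nlinarith) h3
  rw [← hnorm]; exact h5

lemma long_alpha {θ αθ : V} (hθ : R.IsHighest θ) (hfund : R.IsFundamental θ αθ) :
    ⟪αθ, αθ⟫_ℝ = ⟪θ, θ⟫_ℝ ∧ 2 * ⟪θ, αθ⟫_ℝ = ⟪αθ, αθ⟫_ℝ := by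
  have hαθroot := R.simple_mem_roots hfund.1
  have haa := R.inner_self_pos' hαθroot
  have hθθ := R.inner_self_pos' hθ.1.1
  have hta : 2 * ⟪θ, αθ⟫_ℝ = ⟪αθ, αθ⟫_ℝ := by
    have h := hfund.2.2.2
    field_simp at h
    linarith
  obtain ⟨l, hl⟩ := R.pair_int hαθroot hθ.1.1
  have hcomm : ⟪αθ, θ⟫_ℝ = ⟪θ, αθ⟫_ℝ := real_inner_comm _ _
  have hle := R.root_norm_le hθ hαθroot
  have hlpos : 0 < l := by
    have h0 : 0 < (l : ℝ) := by nlinarith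
    exact_mod_cast h0
  have hl1 : (1:ℝ) ≤ (l:ℝ) := by exact_mod_cast hlpos
  constructor
  · nlinarith
  · exact hta

lemma fund_orth {θ αθ : V} (hfund : R.IsFundamental θ αθ) {β : V}
    (hβ : β ∈ R.simples) (hne : β ≠ αθ) : ⟪θ, β⟫_ℝ = 0 := by
  by_contra h
  exact hne (hfund.2.2.1 β hβ h)

lemma coeff_theta_alpha {θ αθ : V} (hθ : R.IsHighest θ) (hfund : R.IsFundamental θ αθ) :
    R.coeff θ αθ = 2 := by
  obtain ⟨haa, hta⟩ := R.long_alpha hθ hfund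
  have hθθ := R.inner_self_pos' hθ.1.1
  have hexp := R.inner_expand hθ.1.1 θ
  have hsingle : ∑ β ∈ R.simples, (R.coeff θ β : ℝ) * ⟪β, θ⟫_ℝ
      = (R.coeff θ αθ : ℝ) * ⟪αθ, θ⟫_ℝ := by
    refine Finset.sum_eq_single_of_mem αθ hfund.1 fun β hβ hne => ?_
    rw [real_inner_comm, R.fund_orth hfund hβ hne, mul_zero]
  rw [hsingle] at hexp
  have h2aθ : 2 * ⟪αθ, θ⟫_ℝ = ⟪θ, θ⟫_ℝ := by
    rw [real_inner_comm]; linarith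
  have h5 : 2 * ⟪θ, θ⟫_ℝ = (R.coeff θ αθ : ℝ) * ⟪θ, θ⟫_ℝ := by
    calc 2 * ⟪θ, θ⟫_ℝ = (R.coeff θ αθ : ℝ) * (2 * ⟪αθ, θ⟫_ℝ) := by rw [hexp]; ring
    _ = (R.coeff θ αθ : ℝ) * ⟪θ, θ⟫_ℝ := by rw [h2aθ]
  have h6 : (R.coeff θ αθ : ℝ) = 2 :=
    (mul_right_cancel₀ (ne_of_gt hθθ) h5.symm)
  exact_mod_cast h6

lemma pairing_le_one {θ αθ : V} (hθ : R.IsHighest θ) (hαθ : αθ ∈ R.roots)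
    (haa : ⟪αθ, αθ⟫_ℝ = ⟪θ, θ⟫_ℝ) {x : V} (hx : x ∈ R.roots) (hxa : x ≠ αθ)
    {k : ℤ} (hk : 2 * ⟪x, αθ⟫_ℝ = (k : ℝ) * ⟪αθ, αθ⟫_ℝ) : k ≤ 1 := by
  by_contra hcon
  push_neg at hcon
  obtain ⟨l, hl⟩ := R.pair_int hαθ hx
  have hxx := R.inner_self_pos' hx
  have ha0 := R.inner_self_pos' hαθ
  have hθle := R.root_norm_le hθ hx
  have hcm : ⟪αθ, x⟫_ℝ = ⟪x, αθ⟫_ℝ := real_inner_comm _ _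
  have hk2 : (2:ℝ) ≤ (k:ℝ) := by exact_mod_cast hcon
  have hl1 : 1 ≤ l := by
    have h0 : 0 < (l:ℝ) := by nlinarith
    exact_mod_cast h0
  have hl' : 2 * ⟪x, αθ⟫_ℝ = (l:ℝ) * ⟪x, x⟫_ℝ := by rw [← hcm]; exact hl
  have cs := real_inner_mul_inner_self_le x αθ
  have key : (2 * ⟪x, αθ⟫_ℝ) * (2 * ⟪x, αθ⟫_ℝ)
      = ((k:ℝ) * ⟪αθ, αθ⟫_ℝ) * ((l:ℝ) * ⟪x, x⟫_ℝ) := by rw [← hk, ← hl']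
  have hkl : (k:ℝ) * (l:ℝ) ≤ 4 := by nlinarith [key, cs, mul_pos ha0 hxx]
  have hl2 : l ≤ 2 := by
    by_contra hl3
    push_neg at hl3
    have h3 : (3:ℝ) ≤ (l:ℝ) := by exact_mod_cast hl3
    nlinarith
  interval_cases l
  · push_cast at hl'
    nlinarith [mul_nonneg (by linarith : (0:ℝ) ≤ (k:ℝ) - 2) (le_of_lt ha0)]
  · push_cast at hl' hkl
    have hk4 : (k:ℝ) ≤ 2 := by nlinarith
    have hkeq : (k:ℝ) = 2 := le_antisymm hk4 hk2
    have hz : ⟪x - αθ, x - αθ⟫_ℝ = 0 := by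
      rw [real_inner_sub_sub_self]
      nlinarith
    exact hxa (sub_eq_zero.mp (inner_self_eq_zero.mp hz))

lemma pairing_eq_two_imp {θ αθ : V} (hθ : R.IsHighest θ) (hαθ : αθ ∈ R.roots)
    (haa : ⟪αθ, αθ⟫_ℝ = ⟪θ, θ⟫_ℝ) {x : V} (hx : x ∈ R.roots)
    (hk : 2 * ⟪x, αθ⟫_ℝ = 2 * ⟪αθ, αθ⟫_ℝ) : x = αθ := by
  obtain ⟨l, hl⟩ := R.pair_int hαθ hx
  have hxx := R.inner_self_pos' hx
  have ha0 := R.inner_self_pos' hαθ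
  have hθle := R.root_norm_le hθ hx
  have hcm : ⟪αθ, x⟫_ℝ = ⟪x, αθ⟫_ℝ := real_inner_comm _ _
  have hl1 : 1 ≤ l := by
    have h0 : 0 < (l:ℝ) := by nlinarith
    exact_mod_cast h0
  have hl' : 2 * ⟪x, αθ⟫_ℝ = (l:ℝ) * ⟪x, x⟫_ℝ := by rw [← hcm]; exact hl
  have cs := real_inner_mul_inner_self_le x αθ
  have key : (2 * ⟪x, αθ⟫_ℝ) * (2 * ⟪x, αθ⟫_ℝ)
      = (2 * ⟪αθ, αθ⟫_ℝ) * ((l:ℝ) * ⟪x, x⟫_ℝ) := by rw [← hk, ← hl']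
  have hkl : 2 * (l:ℝ) ≤ 4 := by nlinarith [key, cs, mul_pos ha0 hxx]
  have hl2 : l ≤ 2 := by
    by_contra hl3
    push_neg at hl3
    have h3 : (3:ℝ) ≤ (l:ℝ) := by exact_mod_cast hl3
    nlinarith
  interval_cases l
  · push_cast at hl'
    nlinarith
  · push_cast at hl'
    have hz : ⟪x - αθ, x - αθ⟫_ℝ = 0 := by
      rw [real_inner_sub_sub_self]
      nlinarith
    exact sub_eq_zero.mp (inner_self_eq_zero.mp hz)

lemma pairing_bounds {θ αθ : V} (hθ : R.IsHighest θ) (hαθ : αθ ∈ R.roots)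
    (haa : ⟪αθ, αθ⟫_ℝ = ⟪θ, θ⟫_ℝ) {x : V} (hx : x ∈ R.roots) (h1 : x ≠ αθ)
    (h2 : x ≠ -αθ) {k : ℤ} (hk : 2 * ⟪x, αθ⟫_ℝ = (k : ℝ) * ⟪αθ, αθ⟫_ℝ) :
    -1 ≤ k ∧ k ≤ 1 := by
  refine ⟨?_, R.pairing_le_one hθ hαθ haa hx h1 hk⟩
  have hk' : 2 * ⟪-x, αθ⟫_ℝ = ((-k : ℤ) : ℝ) * ⟪αθ, αθ⟫_ℝ := by
    rw [inner_neg_left]; push_cast; linarith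
  have hxa' : -x ≠ αθ := fun h => h2 (neg_eq_iff_eq_neg.mp h)
  have := R.pairing_le_one hθ hαθ haa (R.neg_mem hx) hxa' hk'
  omega

open scoped Classical in
lemma degS_simple {S : Finset V} (hSs : S ⊆ R.simples) {α : V} (hα : α ∈ R.simples) :
    R.degS S α = if α ∈ S then 1 else 0 := by
  unfold RootSystemData.degS
  rw [Finset.sum_congr rfl (fun β hβ => R.coeff_simple hα β (hSs hβ))]
  exact Finset.sum_ite_eq' S α (fun _ => (1:ℤ))

lemma degS_le {S : Finset V} (hSs : S ⊆ R.simples) {x y : V}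
    (h : ∀ β ∈ R.simples, R.coeff x β ≤ R.coeff y β) : R.degS S x ≤ R.degS S y :=
  Finset.sum_le_sum fun β hβ => h β (hSs hβ)

lemma degS_congr {S : Finset V} (hSs : S ⊆ R.simples) {x : V} {f : V → ℤ}
    (h : ∀ β ∈ R.simples, R.coeff x β = f β) : R.degS S x = ∑ β ∈ S, f β :=
  Finset.sum_congr rfl fun β hβ => h β (hSs hβ)

lemma S_pairing {θ αθ : V} {S : Finset V} (hθ : R.IsHighest θ) (hfund : R.IsFundamental θ αθ)
    (hS : (↑S : Set V) = {β : V | β ∈ R.simples ∧ β ≠ αθ ∧ ⟪β, αθ⟫_ℝ ≠ 0})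
    {β : V} (hβ : β ∈ S) : 2 * ⟪β, αθ⟫_ℝ = - ⟪αθ, αθ⟫_ℝ := by
  have hβ' : (β : V) ∈ (↑S : Set V) := hβ
  rw [hS] at hβ'
  obtain ⟨hbPi, hne, hnz⟩ := hβ'
  obtain ⟨haa, hta⟩ := R.long_alpha hθ hfund
  have hαθroot := R.simple_mem_roots hfund.1
  have hβroot := R.simple_mem_roots hbPi
  obtain ⟨k, hk⟩ := R.pair_int hβroot hαθroot
  have hneg : ⟪β, αθ⟫_ℝ ≤ 0 := R.simple_inner_nonpos hbPi hfund.1 hne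
  have ha0 := R.inner_self_pos' hαθroot
  have hbd := R.pairing_bounds hθ hαθroot haa hβroot hne (R.simple_ne_neg hbPi hfund.1) hk
  have hklt : (k : ℝ) < 0 := by
    rcases lt_or_eq_of_le hneg with h | h
    · nlinarith
    · exact absurd h hnz
  have hk0 : k < 0 := by exact_mod_cast hklt
  have hkm1 : k = -1 := by omega
  rw [hkm1] at hk
  push_cast at hk
  linarith

open scoped Classical in
lemma deg_identity {θ αθ : V} {S : Finset V} (hθ : R.IsHighest θ)
    (hfund : R.IsFundamental θ αθ)
    (hS : (↑S : Set V) = {β : V | β ∈ R.simples ∧ β ≠ αθ ∧ ⟪β, αθ⟫_ℝ ≠ 0})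
    {γ : V} (hγ : γ ∈ R.roots) :
    2 * ⟪γ, αθ⟫_ℝ = ((2 * R.coeff γ αθ - R.degS S γ : ℤ) : ℝ) * ⟪αθ, αθ⟫_ℝ := by
  have hSs : S ⊆ R.simples := by
    intro β hβ
    have hβ' : (β : V) ∈ (↑S : Set V) := hβ
    rw [hS] at hβ'
    exact hβ'.1
  have hαθS : αθ ∉ S := by
    intro h
    have h' : (αθ : V) ∈ (↑S : Set V) := h
    rw [hS] at h'
    exact h'.2.1 rfl
  have hexp := R.inner_expand hγ αθ
  have hsplit : ∑ β ∈ R.simples, (R.coeff γ β : ℝ) * ⟪β, αθ⟫_ℝ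
      = ∑ β ∈ R.simples \ S, (R.coeff γ β : ℝ) * ⟪β, αθ⟫_ℝ
        + ∑ β ∈ S, (R.coeff γ β : ℝ) * ⟪β, αθ⟫_ℝ :=
    (Finset.sum_sdiff hSs).symm
  have hrest : ∑ β ∈ R.simples \ S, (R.coeff γ β : ℝ) * ⟪β, αθ⟫_ℝ
      = (R.coeff γ αθ : ℝ) * ⟪αθ, αθ⟫_ℝ := by
    refine Finset.sum_eq_single_of_mem αθ (Finset.mem_sdiff.mpr ⟨hfund.1, hαθS⟩) ?_
    intro β hβ hne
    obtain ⟨hbPi, hβS⟩ := Finset.mem_sdiff.mp hβ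
    have hz : ⟪β, αθ⟫_ℝ = 0 := by
      by_contra hnz
      apply hβS
      have hmem : (β : V) ∈ {β : V | β ∈ R.simples ∧ β ≠ αθ ∧ ⟪β, αθ⟫_ℝ ≠ 0} := ⟨hbPi, hne, hnz⟩
      rw [← hS] at hmem
      exact hmem
    rw [hz, mul_zero]
  have hSsum : ∀ β ∈ S, (R.coeff γ β : ℝ) * ⟪β, αθ⟫_ℝ
      = (R.coeff γ β : ℝ) * (- ⟪αθ, αθ⟫_ℝ / 2) := by
    intro β hβ
    have hb : ⟪β, αθ⟫_ℝ = - ⟪αθ, αθ⟫_ℝ / 2 := by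
      have := R.S_pairing hθ hfund hS hβ
      linarith
    rw [hb]
  have hcast : ((R.degS S γ : ℤ) : ℝ) = ∑ β ∈ S, (R.coeff γ β : ℝ) := by
    unfold RootSystemData.degS
    push_cast
    rfl
  rw [hexp, hsplit, hrest, Finset.sum_congr rfl hSsum]
  push_cast
  rw [hcast, ← Finset.sum_mul]
  ring

lemma pair_val {θ αθ : V} {S : Finset V} (hθ : R.IsHighest θ)
    (hfund : R.IsFundamental θ αθ)
    (hS : (↑S : Set V) = {β : V | β ∈ R.simples ∧ β ≠ αθ ∧ ⟪β, αθ⟫_ℝ ≠ 0})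
    {γ : V} (hγ : γ ∈ R.roots) {k : ℤ}
    (hk : 2 * ⟪γ, αθ⟫_ℝ = (k : ℝ) * ⟪αθ, αθ⟫_ℝ) :
    k = 2 * R.coeff γ αθ - R.degS S γ := by
  have hid := R.deg_identity hθ hfund hS hγ
  have ha0 := R.inner_self_pos' (R.simple_mem_roots hfund.1)
  have h : (k : ℝ) = ((2 * R.coeff γ αθ - R.degS S γ : ℤ) : ℝ) :=
    mul_right_cancel₀ (ne_of_gt ha0) (hk.symm.trans hid)
  exact_mod_cast h

lemma degS_theta {θ αθ : V} {S : Finset V} (hθ : R.IsHighest θ)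
    (hfund : R.IsFundamental θ αθ)
    (hS : (↑S : Set V) = {β : V | β ∈ R.simples ∧ β ≠ αθ ∧ ⟪β, αθ⟫_ℝ ≠ 0}) :
    R.degS S θ = 3 := by
  obtain ⟨haa, hta⟩ := R.long_alpha hθ hfund
  have h1 : (1 : ℤ) = 2 * R.coeff θ αθ - R.degS S θ :=
    R.pair_val hθ hfund hS hθ.1.1 (by push_cast; linarith)
  have h2 := R.coeff_theta_alpha hθ hfund
  omega

end RootSystemData

/-- Theorem 4.1(i) / Proposition 2.5: if `θ` is fundamental, `S` is the
set of simple roots adjacent to `α_θ` and `I = {γ ∈ Δ⁺ : deg_S(γ) ≥ 2}` (which is the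
abelian ideal `a(α_θ)`), then `S(I) = S`; equivalently,
`Π ∖ S(I) = {α_θ} ∪ {β ∈ Π : (β, α_θ) = 0}`. -/
theorem stmt11 {V : Type} [NormedAddCommGroup V] [InnerProductSpace ℝ V] [FiniteDimensional ℝ V]
    (R : RootSystemData V) (θ αθ : V) (hθ : R.IsHighest θ)
    (hfund : R.IsFundamental θ αθ)
    (S : Finset V) (hS : (↑S : Set V) = {β : V | β ∈ R.simples ∧ β ≠ αθ ∧ ⟪β, αθ⟫_ℝ ≠ 0})
    (I : Set V) (hI : I = {γ : V | γ ∈ R.posRoots ∧ 2 ≤ R.degS S γ}) :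
    R.normS I = ↑S ∧
      ↑R.simples \ R.normS I = {αθ} ∪ {β : V | β ∈ R.simples ∧ ⟪β, αθ⟫_ℝ = 0} := by
  classical
  subst hI
  have hSs : S ⊆ R.simples := by
    intro β hβ
    have hβ' : (β : V) ∈ (↑S : Set V) := hβ
    rw [hS] at hβ'; exact hβ'.1
  have haPi := hfund.1
  have hαθroot := R.simple_mem_roots haPi
  have hθroot : θ ∈ R.roots := hθ.1.1
  have hαθS : αθ ∉ S := by
    intro h
    have h' : (αθ : V) ∈ (↑S : Set V) := h
    rw [hS] at h'; exact h'.2.1 rfl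
  obtain ⟨haa, hta⟩ := R.long_alpha hθ hfund
  have hm := R.coeff_theta_alpha hθ hfund
  have hdθ := R.degS_theta hθ hfund hS
  have ha0 := R.inner_self_pos' hαθroot
  have hθθ := R.inner_self_pos' hθroot
  have hcoeffθ : ∀ γ ∈ R.roots, ∀ β ∈ R.simples, R.coeff γ β ≤ R.coeff θ β :=
    fun γ hγ => R.coeff_le_of_rle hγ hθroot (hθ.2 γ hγ)
  have hdegle : ∀ γ ∈ R.roots, R.degS S γ ≤ 3 := fun γ hγ => by
    rw [← hdθ]; exact R.degS_le hSs (hcoeffθ γ hγ)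
  have hdegSsimple : ∀ β ∈ R.simples, R.degS S β = if β ∈ S then 1 else 0 :=
    fun β hβ => R.degS_simple hSs hβ
  have hθne_αθ : θ ≠ αθ := by
    intro h
    have h3 := R.coeff_simple haPi αθ haPi
    rw [if_pos rfl] at h3
    rw [h] at hm
    omega
  have hμroot : θ - αθ ∈ R.roots := by
    have h := R.refl_mem hθroot hαθroot (k := 1) (by push_cast; linarith)
    simpa using h
  have hμpos : θ - αθ ∈ R.posRoots := R.pos_sub_simple hθ.1 haPi hμroot hθne_αθ
  have hμcoeff := R.coeff_sub hθroot hαθroot hμroot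
  have hμdeg : R.degS S (θ - αθ) = 3 := by
    have e := R.degS_congr hSs (x := θ - αθ)
      (f := fun β => R.coeff θ β - (if β = αθ then 1 else 0))
      (fun β hβ => by rw [hμcoeff β hβ, R.coeff_simple haPi β hβ])
    rw [e, Finset.sum_sub_distrib, Finset.sum_ite_eq' S αθ (fun _ => (1:ℤ)), if_neg hαθS]
    have e2 : ∑ β ∈ S, R.coeff θ β = 3 := hdθ
    omega
  have hμαθ : R.coeff (θ - αθ) αθ = 1 := by
    rw [hμcoeff αθ haPi, R.coeff_simple haPi αθ haPi, if_pos rfl]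
    omega
  have hμht : R.ht (θ - αθ) = R.ht θ - 1 := by
    have h := R.ht_sub_zsmul_simple hθroot haPi (k := 1) (by simpa using hμroot)
    simpa using h
  have hθsub_not : ∀ β ∈ R.simples, β ≠ αθ → θ - β ∉ R.roots := by
    intro β hβ hne hmem
    have horth : ⟪θ, β⟫_ℝ = 0 := R.fund_orth hfund hβ hne
    have hββ := R.inner_self_pos' (R.simple_mem_roots hβ)
    have hk : 2 * ⟪θ - β, β⟫_ℝ = ((-2 : ℤ) : ℝ) * ⟪β, β⟫_ℝ := by
      rw [inner_sub_left]; push_cast; linarith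
    have h2 := R.refl_mem hmem (R.simple_mem_roots hβ) hk
    have e : θ - β - (-2 : ℤ) • β = θ + β := by
      have e1 : ((-2 : ℤ)) • β = -(β + β) := by
        rw [neg_smul, two_zsmul]
      rw [e1]; abel
    rw [e] at h2
    have hle := R.coeff_le_of_rle h2 hθroot (hθ.2 _ h2) β hβ
    rw [R.coeff_add hθroot (R.simple_mem_roots hβ) h2 β hβ, R.coeff_simple hβ β hβ,
      if_pos rfl] at hle
    omega
  -- easy direction
  have heasy : R.normS {γ : V | γ ∈ R.posRoots ∧ 2 ≤ R.degS S γ} ⊆ ↑S := by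
    rintro α ⟨haPi2, γ, hγmin, hcase⟩
    have hγI := hγmin.1
    have hγpos : γ ∈ R.posRoots := hγI.1
    have hγdeg : 2 ≤ R.degS S γ := hγI.2
    have hαroot := R.simple_mem_roots haPi2
    rcases hcase with hsubpos | heqα
    · by_contra hαS
      have hαS' : α ∉ S := fun h => hαS h
      have hc := R.coeff_sub hγpos.1 hαroot hsubpos.1
      have hdeg2 : R.degS S (γ - α) = R.degS S γ := by
        have e := R.degS_congr hSs (x := γ - α)
          (f := fun β => R.coeff γ β - (if β = α then 1 else 0))
          (fun β hβ => by rw [hc β hβ, R.coeff_simple haPi2 β hβ])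
        rw [e, Finset.sum_sub_distrib, Finset.sum_ite_eq' S α (fun _ => (1:ℤ)), if_neg hαS',
          sub_zero]
        rfl
      have hsubI : γ - α ∈ {γ : V | γ ∈ R.posRoots ∧ 2 ≤ R.degS S γ} := ⟨hsubpos, by omega⟩
      have hrle : R.rle (γ - α) γ := R.rle_of_coeff_le hsubpos.1 hγpos.1
        (fun β hβ => by
          rw [hc β hβ, R.coeff_simple haPi2 β hβ]
          by_cases hb : β = α
          · rw [if_pos hb]; omega
          · rw [if_neg hb]; omega)
      have heq := hγmin.2 (γ - α) hsubI hrle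
      have hα0 : α = (0 : V) := sub_eq_self.mp heq
      exact R.nonzero α hαroot hα0
    · subst heqα
      rw [hdegSsimple γ haPi2] at hγdeg
      split_ifs at hγdeg <;> omega
  -- hard direction
  have hhard : (↑S : Set V) ⊆ R.normS {γ : V | γ ∈ R.posRoots ∧ 2 ≤ R.degS S γ} := by
    intro α hαmem'
    have hαmem : α ∈ S := hαmem'
    have hαdata : α ∈ R.simples ∧ α ≠ αθ ∧ ⟪α, αθ⟫_ℝ ≠ 0 := by
      rw [hS] at hαmem'; exact hαmem'
    obtain ⟨haPi2, hααθ, hαnz⟩ := hαdata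
    have hαroot := R.simple_mem_roots haPi2
    have hααθ_neg : ⟪α, αθ⟫_ℝ < 0 :=
      lt_of_le_of_ne (R.simple_inner_nonpos haPi2 haPi hααθ) hαnz
    have hθα : ⟪θ, α⟫_ℝ = 0 := R.fund_orth hfund haPi2 hααθ
    have hdegα : R.degS S α = 1 := by rw [hdegSsimple α haPi2, if_pos hαmem]
    set A : Set V := {ρ : V | ρ ∈ R.posRoots ∧ 2 ≤ R.degS S ρ ∧ ρ - α ∈ R.posRoots} with hA
    have hAfin : A.Finite := R.finite.subset (fun ρ hρ => hρ.1.1)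
    have hμinner : 0 < ⟪θ - αθ, α⟫_ℝ := by
      rw [inner_sub_left, hθα]
      have hcm : ⟪αθ, α⟫_ℝ = ⟪α, αθ⟫_ℝ := real_inner_comm _ _
      linarith
    have hμneα : θ - αθ ≠ α := by
      intro h
      have h2 : R.degS S α = 3 := by rw [← h]; exact hμdeg
      omega
    have hμsubroot : (θ - αθ) - α ∈ R.roots := R.root_sub_mem hμroot hαroot hμinner hμneα
    have hμsubpos := R.pos_sub_simple hμpos haPi2 hμsubroot hμneα
    have hμA : (θ - αθ) ∈ A := ⟨hμpos, by omega, hμsubpos⟩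
    obtain ⟨ν, hνF, hνmin⟩ := Finset.exists_min_image hAfin.toFinset R.ht
      ⟨_, hAfin.mem_toFinset.mpr hμA⟩
    have hνA : ν ∈ A := hAfin.mem_toFinset.mp hνF
    have hνmin' : ∀ ρ ∈ A, R.ht ν ≤ R.ht ρ := fun ρ hρ => hνmin ρ (hAfin.mem_toFinset.mpr hρ)
    obtain ⟨hνpos, hνdeg, hνsub⟩ := hνA
    have hνroot := hνpos.1
    have hmin : ν ∈ R.minSet {γ : V | γ ∈ R.posRoots ∧ 2 ≤ R.degS S γ} := by
      refine ⟨⟨hνpos, hνdeg⟩, ?_⟩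
      intro ν' hν' hrle
      by_contra hne'
      obtain ⟨hν'pos, hν'deg⟩ := hν'
      have hple := R.coeff_le_of_rle hν'pos.1 hνroot hrle
      obtain ⟨β, hbPi2, hzpos, hzle⟩ :=
        R.chain_aux (R.ht ν - R.ht ν').toNat ν' ν hν'pos hνpos hple hne' le_rfl
      have hβroot := R.simple_mem_roots hbPi2
      have hzdeg : 2 ≤ R.degS S (ν - β) := le_trans hν'deg (R.degS_le hSs hzle)
      have hzcoeff := R.coeff_sub hνroot hβroot hzpos.1
      have hzneν : ν - β ≠ ν := fun h => R.nonzero β hβroot (sub_eq_self.mp h)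
      have hzlt : R.ht (ν - β) < R.ht ν := R.ht_lt hzpos.1 hνroot
        (fun β' hβ' => by
          rw [hzcoeff β' hβ', R.coeff_simple hbPi2 β' hβ']
          by_cases hb : β' = β
          · rw [if_pos hb]; omega
          · rw [if_neg hb]; omega) hzneν
      have hznotA : (ν - β) ∉ A := fun h => absurd (hνmin' _ h) (not_le.mpr hzlt)
      have hzneα : ν - β ≠ α := by
        intro h
        rw [h] at hzdeg
        omega
      have hzα : ⟪ν - β, α⟫_ℝ ≤ 0 := by
        by_contra hzα'
        push_neg at hzα'
        have h1 := R.root_sub_mem hzpos.1 hαroot hzα' hzneα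
        have h2 := R.pos_sub_simple hzpos haPi2 h1 hzneα
        exact hznotA ⟨hzpos, hzdeg, h2⟩
      by_cases hβα : β = α
      · -- main case
        have hba2 : α = β := hβα.symm
        subst hba2
        have hydeg_eq : R.degS S (ν - α) = R.degS S ν - 1 := by
          have e := R.degS_congr hSs (x := ν - α)
            (f := fun b => R.coeff ν b - (if b = α then 1 else 0))
            (fun b hb => by rw [hzcoeff b hb, R.coeff_simple hbPi2 b hb])
          rw [e, Finset.sum_sub_distrib, Finset.sum_ite_eq' S α (fun _ => (1:ℤ)), if_pos hαmem]
          rfl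
        have hνdeg3 : R.degS S ν = 3 := by
          have h3 := hdegle ν hνroot; omega
        have hydeg2 : R.degS S (ν - α) = 2 := by omega
        have hyneαθ : ν - α ≠ αθ := by
          intro h
          rw [h] at hydeg2
          rw [hdegSsimple αθ haPi, if_neg hαθS] at hydeg2
          omega
        have hyne_negαθ : ν - α ≠ -αθ := by
          intro h
          have hcn := R.coeff_neg hαθroot
          have e := R.degS_congr hSs (x := -αθ)
            (f := fun b => -(if b = αθ then 1 else 0))
            (fun b hb => by rw [hcn b hb, R.coeff_simple haPi b hb])
          rw [h, e, Finset.sum_neg_distrib, Finset.sum_ite_eq' S αθ (fun _ => (1:ℤ)),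
            if_neg hαθS] at hydeg2
          omega
        obtain ⟨ky, hky⟩ := R.pair_int hzpos.1 hαθroot
        have hkyval := R.pair_val hθ hfund hS hzpos.1 hky
        have hbd := R.pairing_bounds hθ hαθroot haa hzpos.1 hyneαθ hyne_negαθ hky
        have hyαθ : R.coeff (ν - α) αθ = 1 := by omega
        have hναθ : R.coeff ν αθ = 1 := by
          have h3 := hzcoeff αθ haPi
          rw [R.coeff_simple hbPi2 αθ haPi, if_neg (fun h => hααθ h.symm)] at h3
          omega
        have hνθ : 0 < ⟪ν, θ⟫_ℝ := by
          have hexp := R.inner_expand hνroot θ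
          have hsingle : ∑ b ∈ R.simples, (R.coeff ν b : ℝ) * ⟪b, θ⟫_ℝ
              = (R.coeff ν αθ : ℝ) * ⟪αθ, θ⟫_ℝ :=
            Finset.sum_eq_single_of_mem αθ haPi (fun b hb hne => by
              rw [real_inner_comm, R.fund_orth hfund hb hne, mul_zero])
          rw [hexp, hsingle, hναθ]
          have hcm2 : ⟪αθ, θ⟫_ℝ = ⟪θ, αθ⟫_ℝ := real_inner_comm _ _
          push_cast
          linarith
        have hνneθ : ν ≠ θ := by
          intro h
          rw [h] at hναθ; omega
        have hτroot : θ - ν ∈ R.roots :=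
          R.root_sub_mem hθroot hνroot (by rw [real_inner_comm]; exact hνθ) (Ne.symm hνneθ)
        have hτcoeff := R.coeff_sub hθroot hνroot hτroot
        have hτpos : θ - ν ∈ R.posRoots := ⟨hτroot, fun b hb => by
          rw [hτcoeff b hb]; have := hcoeffθ ν hνroot b hb; omega⟩
        have hτγθ : R.coeff (θ - ν) αθ = 1 := by rw [hτcoeff αθ haPi]; omega
        have hτdeg : R.degS S (θ - ν) = 0 := by
          have e := R.degS_congr hSs (x := θ - ν)
            (f := fun b => R.coeff θ b - R.coeff ν b) hτcoeff
          rw [e, Finset.sum_sub_distrib]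
          have e2 : ∑ b ∈ S, R.coeff θ b = 3 := hdθ
          have e3 : ∑ b ∈ S, R.coeff ν b = 3 := hνdeg3
          omega
        have hτk : 2 * ⟪θ - ν, αθ⟫_ℝ = 2 * ⟪αθ, αθ⟫_ℝ := by
          have hid := R.deg_identity hθ hfund hS hτroot
          rw [hτγθ, hτdeg] at hid
          push_cast at hid
          linarith
        have hτeq : θ - ν = αθ := R.pairing_eq_two_imp hθ hαθroot haa hτroot hτk
        have hνμ : ν = θ - αθ := by rw [← hτeq]; abel
        have hAmu : ∀ ρ ∈ A, ρ = θ - αθ := by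
          intro ρ hρ
          obtain ⟨hρpos, hρdeg, hρsub⟩ := hρ
          have hρroot := hρpos.1
          have hρle := hcoeffθ ρ hρroot
          have hhtρ : R.ht ν ≤ R.ht ρ := hνmin' ρ ⟨hρpos, hρdeg, hρsub⟩
          have hhtρ2 : R.ht ρ ≤ R.ht θ := R.ht_le_theta hθ hρroot
          have hhtν : R.ht ν = R.ht θ - 1 := by rw [hνμ]; exact hμht
          by_cases hcase0 : R.ht ρ = R.ht θ
          · have hρθ : ρ = θ := by
              refine R.eq_of_coeff_eq hρroot hθroot (fun b hb => ?_)
              by_contra hnb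
              have hlt : R.coeff ρ b < R.coeff θ b := lt_of_le_of_ne (hρle b hb) hnb
              have hlt2 := Finset.sum_lt_sum hρle ⟨b, hb, hlt⟩
              have e1 : ∑ b ∈ R.simples, R.coeff ρ b = R.ht ρ := rfl
              have e2 : ∑ b ∈ R.simples, R.coeff θ b = R.ht θ := rfl
              omega
            rw [hρθ] at hρsub
            exact absurd hρsub.1 (hθsub_not α haPi2 hααθ)
          · have hht1 : R.ht ρ = R.ht θ - 1 := by omega
            have hDsum : ∑ b ∈ R.simples, (R.coeff θ b - R.coeff ρ b) = 1 := by
              rw [Finset.sum_sub_distrib]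
              have e1 : ∑ b ∈ R.simples, R.coeff θ b = R.ht θ := rfl
              have e2 : ∑ b ∈ R.simples, R.coeff ρ b = R.ht ρ := rfl
              omega
            have hex0 : ∃ b₀ ∈ R.simples, 0 < R.coeff θ b₀ - R.coeff ρ b₀ := by
              by_contra hno
              push_neg at hno
              have h4 : ∑ b ∈ R.simples, (R.coeff θ b - R.coeff ρ b) ≤ 0 :=
                Finset.sum_nonpos (fun b hb => hno b hb)
              omega
            obtain ⟨b₀, hb₀, hb₀pos⟩ := hex0
            have hsplit : R.coeff θ b₀ - R.coeff ρ b₀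
                + ∑ x ∈ R.simples.erase b₀, (R.coeff θ x - R.coeff ρ x)
                = ∑ b ∈ R.simples, (R.coeff θ b - R.coeff ρ b) :=
              Finset.add_sum_erase R.simples (fun b => R.coeff θ b - R.coeff ρ b) hb₀
            have hrest_nonneg : ∀ x ∈ R.simples.erase b₀, 0 ≤ R.coeff θ x - R.coeff ρ x :=
              fun x hx => by have := hρle x (Finset.mem_of_mem_erase hx); omega
            have hrest_sum : 0 ≤ ∑ x ∈ R.simples.erase b₀, (R.coeff θ x - R.coeff ρ x) :=
              Finset.sum_nonneg hrest_nonneg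
            have hrestsum_z : ∑ x ∈ R.simples.erase b₀, (R.coeff θ x - R.coeff ρ x) = 0 := by
              omega
            have hb₀1 : R.coeff θ b₀ - R.coeff ρ b₀ = 1 := by omega
            have hrest0 : ∀ b ∈ R.simples, b ≠ b₀ → R.coeff θ b - R.coeff ρ b = 0 :=
              fun b hb hne => (Finset.sum_eq_zero_iff_of_nonneg hrest_nonneg).mp hrestsum_z
                b (Finset.mem_erase.mpr ⟨hne, hb⟩)
            have hcoeffval : ∀ b ∈ R.simples,
                R.coeff ρ b = R.coeff θ b - (if b = b₀ then 1 else 0) := by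
              intro b hb
              by_cases hbb : b = b₀
              · subst hbb; rw [if_pos rfl]; omega
              · rw [if_neg hbb]; have := hrest0 b hb hbb; omega
            have hρeq : ρ = θ - b₀ := by
              have h5 : ρ = ∑ b ∈ R.simples, (R.coeff θ b - (if b = b₀ then 1 else 0)) • b := by
                conv_lhs => rw [R.coeff_spec ρ hρroot]
                exact Finset.sum_congr rfl fun b hb => by rw [hcoeffval b hb]
              rw [h5, Finset.sum_congr rfl
                (fun b _ => sub_smul (R.coeff θ b) (if b = b₀ then (1:ℤ) else 0) b),
                Finset.sum_sub_distrib, ← R.coeff_spec θ hθroot]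
              congr 1
              simp [ite_smul, Finset.sum_ite_eq', hb₀]
            by_cases hb₀αθ : b₀ = αθ
            · rw [hρeq, hb₀αθ]
            · exact absurd (hρeq ▸ hρroot) (hθsub_not b₀ hb₀ hb₀αθ)
        by_cases hS2 : ∃ α' ∈ S, α' ≠ α
        · obtain ⟨α', hα'S, hα'ne⟩ := hS2
          have ha'Pi := hSs hα'S
          have hα'root := R.simple_mem_roots ha'Pi
          have hα'data : α' ≠ αθ ∧ ⟪α', αθ⟫_ℝ ≠ 0 := by
            have h' : (α' : V) ∈ (↑S : Set V) := hα'S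
            rw [hS] at h'; exact ⟨h'.2.1, h'.2.2⟩
          have hμα' : 0 < ⟪θ - αθ, α'⟫_ℝ := by
            rw [inner_sub_left, R.fund_orth hfund ha'Pi hα'data.1]
            have h1 : ⟪αθ, α'⟫_ℝ = ⟪α', αθ⟫_ℝ := real_inner_comm _ _
            have h2 : ⟪α', αθ⟫_ℝ < 0 :=
              lt_of_le_of_ne (R.simple_inner_nonpos ha'Pi haPi hα'data.1) hα'data.2
            linarith
          have hμneα' : θ - αθ ≠ α' := by
            intro h
            have h3 : R.degS S α' = 3 := by rw [← h]; exact hμdeg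
            rw [hdegSsimple α' ha'Pi, if_pos hα'S] at h3; omega
          have hρ'root := R.root_sub_mem hμroot hα'root hμα' hμneα'
          have hρ'pos := R.pos_sub_simple hμpos ha'Pi hρ'root hμneα'
          have hρ'c := R.coeff_sub hμroot hα'root hρ'root
          have hρ'deg : R.degS S (θ - αθ - α') = 2 := by
            have e := R.degS_congr hSs (x := θ - αθ - α')
              (f := fun b => R.coeff (θ - αθ) b - (if b = α' then 1 else 0))
              (fun b hb => by rw [hρ'c b hb, R.coeff_simple ha'Pi b hb])
            rw [e, Finset.sum_sub_distrib, Finset.sum_ite_eq' S α' (fun _ => (1:ℤ)),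
              if_pos hα'S]
            have e2 : ∑ b ∈ S, R.coeff (θ - αθ) b = 3 := hμdeg
            omega
          have hρ'α : 0 < ⟪θ - αθ - α', α⟫_ℝ := by
            rw [inner_sub_left]
            have h3 : ⟪α', α⟫_ℝ ≤ 0 := R.simple_inner_nonpos ha'Pi haPi2 hα'ne
            linarith
          have hρ'neα : θ - αθ - α' ≠ α := by
            intro h
            have h3 : R.degS S α = 2 := by rw [← h]; exact hρ'deg
            omega
          have hρ'subroot := R.root_sub_mem hρ'pos.1 hαroot hρ'α hρ'neα
          have hρ'subpos := R.pos_sub_simple hρ'pos haPi2 hρ'subroot hρ'neα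
          have hρ'A : (θ - αθ - α') ∈ A := ⟨hρ'pos, by omega, hρ'subpos⟩
          have h6 := hAmu _ hρ'A
          have h7 : α' = 0 := by
            have h8 : θ - αθ - α' = θ - αθ := h6
            have h9 := sub_eq_self.mp h8
            exact h9
          exact R.nonzero α' hα'root h7
        · push_neg at hS2
          set H : Set V := {x : V | x ∈ R.posRoots ∧ R.degS S x = 1 ∧ R.coeff x αθ = 1}
            with hH
          have hHfin : H.Finite := R.finite.subset (fun x hx => hx.1.1)
          have hρ0root : αθ + α ∈ R.roots := R.root_add_mem hαθroot hαroot
            (by rw [real_inner_comm]; linarith) (R.simple_ne_neg haPi haPi2)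
          have hαθpos : αθ ∈ R.posRoots := ⟨hαθroot, fun b hb => by
            rw [R.coeff_simple haPi b hb]; split <;> omega⟩
          have hρ0pos := R.pos_add_simple hαθpos haPi2 hρ0root
          have hρ0c := R.coeff_add hαθroot hαroot hρ0root
          have hρ0deg : R.degS S (αθ + α) = 1 := by
            have e := R.degS_congr hSs (x := αθ + α)
              (f := fun b => (if b = αθ then 1 else 0) + (if b = α then 1 else 0))
              (fun b hb => by
                rw [hρ0c b hb, R.coeff_simple haPi b hb, R.coeff_simple haPi2 b hb])
            rw [e, Finset.sum_add_distrib, Finset.sum_ite_eq' S αθ (fun _ => (1:ℤ)),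
              Finset.sum_ite_eq' S α (fun _ => (1:ℤ)), if_neg hαθS, if_pos hαmem]
            norm_num
          have hρ0αθ : R.coeff (αθ + α) αθ = 1 := by
            rw [hρ0c αθ haPi, R.coeff_simple haPi αθ haPi, R.coeff_simple haPi2 αθ haPi,
              if_pos rfl, if_neg (fun h => hααθ h.symm)]
            norm_num
          have hρ0H : (αθ + α) ∈ H := ⟨hρ0pos, hρ0deg, hρ0αθ⟩
          obtain ⟨η, hηF, hηmax⟩ := Finset.exists_max_image hHfin.toFinset R.ht
            ⟨_, hHfin.mem_toFinset.mpr hρ0H⟩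
          have hηH : η ∈ H := hHfin.mem_toFinset.mp hηF
          have hηmax' : ∀ x ∈ H, R.ht x ≤ R.ht η := fun x hx =>
            hηmax x (hHfin.mem_toFinset.mpr hx)
          obtain ⟨hηpos, hηdeg, hηαθ⟩ := hηH
          have hηroot := hηpos.1
          have hηk : 2 * ⟪η, αθ⟫_ℝ = ⟪αθ, αθ⟫_ℝ := by
            have hid := R.deg_identity hθ hfund hS hηroot
            rw [hηαθ, hηdeg] at hid
            push_cast at hid
            linarith
          have hηα : 0 ≤ ⟪η, α⟫_ℝ := by
            by_contra hc
            push_neg at hc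
            have h1 : η + α ∈ R.roots :=
              R.root_add_mem hηroot hαroot hc (R.pos_ne_neg_simple hηpos haPi2)
            have h2 := R.pos_add_simple hηpos haPi2 h1
            have h3 := R.coeff_add hηroot hαroot h1
            have h4 : R.degS S (η + α) = 2 := by
              have e := R.degS_congr hSs (x := η + α)
                (f := fun b => R.coeff η b + (if b = α then 1 else 0))
                (fun b hb => by rw [h3 b hb, R.coeff_simple haPi2 b hb])
              rw [e, Finset.sum_add_distrib, Finset.sum_ite_eq' S α (fun _ => (1:ℤ)),
                if_pos hαmem]
              have e2 : ∑ b ∈ S, R.coeff η b = 1 := hηdeg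
              omega
            have h5 : (η + α) - α ∈ R.posRoots := by
              have e : η + α - α = η := by abel
              rw [e]; exact hηpos
            have h6 : (η + α) ∈ A := ⟨h2, by omega, h5⟩
            have h7 := hAmu _ h6
            have h8 : R.degS S (η + α) = 3 := by rw [h7]; exact hμdeg
            omega
          have hηdom : ∀ b ∈ R.simples, 0 ≤ ⟪η, b⟫_ℝ := by
            intro b hb
            by_cases hbα : b = α
            · subst hbα; exact hηα
            by_cases hbαθ : b = αθ
            · subst hbαθ; linarith
            · by_contra hc
              push_neg at hc
              have h1 : η + b ∈ R.roots :=
                R.root_add_mem hηroot (R.simple_mem_roots hb) hc (R.pos_ne_neg_simple hηpos hb)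
              have h2 := R.pos_add_simple hηpos hb h1
              have h3 := R.coeff_add hηroot (R.simple_mem_roots hb) h1
              have hbS : b ∉ S := fun h => hbα (hS2 b h)
              have h4 : R.degS S (η + b) = 1 := by
                have e := R.degS_congr hSs (x := η + b)
                  (f := fun b' => R.coeff η b' + (if b' = b then 1 else 0))
                  (fun b' hb' => by rw [h3 b' hb', R.coeff_simple hb b' hb'])
                rw [e, Finset.sum_add_distrib, Finset.sum_ite_eq' S b (fun _ => (1:ℤ)),
                  if_neg hbS]
                have e2 : ∑ b' ∈ S, R.coeff η b' = 1 := hηdeg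
                omega
              have h5 : R.coeff (η + b) αθ = 1 := by
                rw [h3 αθ haPi, R.coeff_simple hb αθ haPi, if_neg (fun h => hbαθ h.symm)]
                omega
              have h6 : (η + b) ∈ H := ⟨h2, h4, h5⟩
              have h7 := hηmax' _ h6
              have h8 : R.ht (η + b) = R.ht η + 1 := by
                unfold RootSystemData.ht
                rw [Finset.sum_congr rfl (fun b' hb' => h3 b' hb'), Finset.sum_add_distrib]
                congr 1
                rw [Finset.sum_congr rfl (fun b' hb' => R.coeff_simple hb b' hb'),
                  Finset.sum_ite_eq' R.simples b (fun _ => (1:ℤ)), if_pos hb]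
              omega
          have hθη : ⟪η, θ⟫_ℝ = ⟪θ, αθ⟫_ℝ := by
            have hexp := R.inner_expand hηroot θ
            have hsingle : ∑ b ∈ R.simples, (R.coeff η b : ℝ) * ⟪b, θ⟫_ℝ
                = (R.coeff η αθ : ℝ) * ⟪αθ, θ⟫_ℝ :=
              Finset.sum_eq_single_of_mem αθ haPi (fun b hb hne => by
                rw [real_inner_comm, R.fund_orth hfund hb hne, mul_zero])
            rw [hexp, hsingle, hηαθ]
            push_cast
            rw [real_inner_comm]
            ring
          have hθmη : 0 ≤ ⟪θ - η, η⟫_ℝ := by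
            rw [R.inner_sub_expand hθroot hηroot η]
            apply Finset.sum_nonneg
            intro b hb
            apply mul_nonneg
            · have h9 := hcoeffθ η hηroot b hb
              have h10 : (0:ℤ) ≤ R.coeff θ b - R.coeff η b := by omega
              exact_mod_cast h10
            · rw [real_inner_comm]; exact hηdom b hb
          have hηη : 0 < ⟪η, η⟫_ℝ := R.inner_self_pos' hηroot
          have hηsmall : 2 * ⟪η, η⟫_ℝ ≤ ⟪θ, θ⟫_ℝ := by
            rw [inner_sub_left] at hθmη
            have h1 : ⟪θ, η⟫_ℝ = ⟪η, θ⟫_ℝ := real_inner_comm _ _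
            linarith
          obtain ⟨c, hc⟩ := R.pair_int hαθroot hηroot
          have hc2 : 2 ≤ c := by
            have h1 : ⟪αθ, η⟫_ℝ = ⟪η, αθ⟫_ℝ := real_inner_comm _ _
            have h2 : (2:ℝ) ≤ (c:ℝ) := by nlinarith
            exact_mod_cast h2
          have hrefl := R.refl_mem hαθroot hηroot hc
          have hωroot : c • η - αθ ∈ R.roots := by
            have h1 := R.neg_mem hrefl
            simpa [neg_sub] using h1
          have hωc := R.coeff_smul_sub hηroot hαθroot hωroot
          have hωαθ : R.coeff (c • η - αθ) αθ = c - 1 := by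
            rw [hωc αθ haPi, hηαθ, R.coeff_simple haPi αθ haPi, if_pos rfl]
            omega
          have hωpos : c • η - αθ ∈ R.posRoots := R.pos_of_coeff_pos hωroot haPi (by omega)
          have hωdeg : R.degS S (c • η - αθ) = c := by
            have e := R.degS_congr hSs (x := c • η - αθ)
              (f := fun b => c * R.coeff η b - (if b = αθ then 1 else 0))
              (fun b hb => by rw [hωc b hb, R.coeff_simple haPi b hb])
            rw [e, Finset.sum_sub_distrib, ← Finset.mul_sum,
              Finset.sum_ite_eq' S αθ (fun _ => (1:ℤ)), if_neg hαθS]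
            have e2 : ∑ b ∈ S, R.coeff η b = 1 := hηdeg
            rw [e2, mul_one, sub_zero]
          have hωα : 0 < ⟪c • η - αθ, α⟫_ℝ := by
            rw [inner_sub_left]
            have hsm : ⟪(c : ℤ) • η, α⟫_ℝ = (c:ℝ) * ⟪η, α⟫_ℝ := by
              rw [← Int.cast_smul_eq_zsmul ℝ, real_inner_smul_left]
            rw [hsm]
            have h1 : ⟪αθ, α⟫_ℝ = ⟪α, αθ⟫_ℝ := real_inner_comm _ _
            have h2 : (0:ℝ) ≤ (c:ℝ) * ⟪η, α⟫_ℝ :=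
              mul_nonneg (by exact_mod_cast (by omega : (0:ℤ) ≤ c)) hηα
            linarith
          have hωneα : c • η - αθ ≠ α := by
            intro h
            have h3 : R.degS S α = c := by rw [← h]; exact hωdeg
            omega
          have hωsubroot := R.root_sub_mem hωpos.1 hαroot hωα hωneα
          have hωsubpos := R.pos_sub_simple hωpos haPi2 hωsubroot hωneα
          have hωA : (c • η - αθ) ∈ A := ⟨hωpos, by rw [hωdeg]; omega, hωsubpos⟩
          have hωμ := hAmu _ hωA
          have hcη : (c : ℝ) • η = θ := by
            have h1 : c • η - αθ = θ - αθ := hωμ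
            have h2 : c • η = θ := sub_left_inj.mp h1
            rw [Int.cast_smul_eq_zsmul, h2]
          have h3 := R.reduced η hηroot (c : ℝ) (by rw [hcη]; exact hθroot)
          rcases h3 with h | h
          · have h4 : c = 1 := by exact_mod_cast h
            omega
          · have h4 : c = -1 := by exact_mod_cast h
            omega
      · -- case β ≠ α
        have hyβ : ⟪ν - α, β⟫_ℝ ≤ 0 := by
          by_contra hcon
          push_neg at hcon
          by_cases hyb : ν - α = β
          · have h1 : ν - β = α := by rw [← hyb]; abel
            rw [h1] at hzdeg
            omega
          · have h1 := R.root_sub_mem hνsub.1 hβroot hcon hyb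
            have e : ν - α - β = ν - β - α := by abel
            rw [e] at h1
            have h2 := R.pos_sub_simple hzpos haPi2 h1 hzneα
            exact hznotA ⟨hzpos, hzdeg, h2⟩
        have hαβnonpos : ⟪α, β⟫_ℝ ≤ 0 :=
          R.simple_inner_nonpos haPi2 hbPi2 (fun h => hβα h.symm)
        have hαz : ⟪α, ν - β⟫_ℝ ≤ 0 := by rw [real_inner_comm]; exact hzα
        have hνν : 0 < ⟪ν, ν⟫_ℝ := R.inner_self_pos' hνroot
        have hyz : 0 < ⟪ν - α, ν - β⟫_ℝ := by
          have e1 : ⟪ν - α, ν - β⟫_ℝ = ⟪ν, ν⟫_ℝ - ⟪ν, β⟫_ℝ - ⟪α, ν⟫_ℝ + ⟪α, β⟫_ℝ := by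
            rw [inner_sub_left, inner_sub_right, inner_sub_right]; ring
          have e2 : ⟪ν - α, β⟫_ℝ = ⟪ν, β⟫_ℝ - ⟪α, β⟫_ℝ := by rw [inner_sub_left]
          have e3 : ⟪α, ν - β⟫_ℝ = ⟪α, ν⟫_ℝ - ⟪α, β⟫_ℝ := by rw [inner_sub_right]
          rw [e1]
          rw [e2] at hyβ
          rw [e3] at hαz
          linarith
        have hyzne : ν - α ≠ ν - β :=
          fun h => hβα ((sub_right_inj.mp h).symm)
        have hdiff := R.root_sub_mem hνsub.1 hzpos.1 hyz hyzne
        have e4 : (ν - α) - (ν - β) = β - α := by abel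
        rw [e4] at hdiff
        have hcd := R.coeff_sub hβroot hαroot hdiff
        have hc1 : R.coeff (β - α) β = 1 := by
          rw [hcd β hbPi2, R.coeff_simple hbPi2 β hbPi2, R.coeff_simple haPi2 β hbPi2,
            if_pos rfl, if_neg hβα]
          norm_num
        have hc2 : R.coeff (β - α) α = -1 := by
          rw [hcd α haPi2, R.coeff_simple hbPi2 α haPi2, R.coeff_simple haPi2 α haPi2,
            if_neg (fun h => hβα h.symm), if_pos rfl]
          norm_num
        rcases R.coeff_sign _ hdiff with hs | hs
        · have := hs α haPi2; omega
        · have := hs β hbPi2; omega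
    exact ⟨haPi2, ν, hmin, Or.inl hνsub⟩
  have hmain : R.normS {γ : V | γ ∈ R.posRoots ∧ 2 ≤ R.degS S γ} = ↑S :=
    Set.Subset.antisymm heasy hhard
  refine ⟨hmain, ?_⟩
  rw [hmain]
  ext b
  simp only [Set.mem_diff, Set.mem_union, Set.mem_singleton_iff, Set.mem_setOf_eq,
    Finset.mem_coe]
  constructor
  · rintro ⟨hbp, hbS⟩
    by_cases hbα : b = αθ
    · exact Or.inl hbα
    · right
      refine ⟨hbp, ?_⟩
      by_contra hnz
      have hmem : (b : V) ∈ (↑S : Set V) := by rw [hS]; exact ⟨hbp, hbα, hnz⟩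
      exact hbS (Finset.mem_coe.mp hmem)
  · rintro (rfl | ⟨hbp, hbz⟩)
    · exact ⟨haPi, fun h => hαθS h⟩
    · refine ⟨hbp, fun h => ?_⟩
      have h' : (b : V) ∈ (↑S : Set V) := Finset.mem_coe.mpr h
      rw [hS] at h'
      exact h'.2.2 hbz
end

section
/- Let Δ be of type A_n (n ≥ 1). Then the map S ↦ I_S = {γ ∈ Δ⁺ : deg_S(γ) ≥ ⌊d(S)/2⌋ + 1} is a bijection from the set of all subsets of Π onto the set of all abelian upper ideals of (Δ⁺, ≼), and its inverse is the map I ↦ S(I). (Equivalently, for g = sl_{n+1} the maps f_2 : p ↦ g(≥ ⌊hot(p)/2⌋ + 1) and f_1 : a ↦ n_g(a) are mutually inverse bijections between standard parabolic subalgebras and abelian ideals of the Borel subalgebra.) -/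
open scoped InnerProductSpace

section Aux

open Finset
open scoped Classical

variable {V : Type} [NormedAddCommGroup V] [InnerProductSpace ℝ V] [FiniteDimensional ℝ V]

structure TypeACtx (V : Type) [NormedAddCommGroup V] [InnerProductSpace ℝ V]
    [FiniteDimensional ℝ V] where
  R : RootSystemData V
  th : V
  hth : R.IsHighest th
  n : ℕ
  hn : 1 ≤ n
  e : Fin n → V
  he : Function.Injective e
  hrange : (↑R.simples : Set V) = Set.range e
  hadj : ∀ i j : Fin n, i ≠ j → (⟪e i, e j⟫_ℝ ≠ 0 ↔ ((i : ℕ) + 1 = j ∨ (j : ℕ) + 1 = i))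
  hlaced : ∀ γ ∈ R.roots, ∀ γ' ∈ R.roots, ‖γ‖ = ‖γ'‖

namespace TypeACtx

variable (C : TypeACtx V)

noncomputable def E (k : ℕ) : V := if h : k < C.n then C.e ⟨k, h⟩ else 0

lemma E_eq (k : ℕ) (h : k < C.n) : C.E k = C.e ⟨k, h⟩ := dif_pos h

lemma simples_eq : C.R.simples = Finset.univ.image C.e := by
  apply Finset.coe_injective
  rw [C.hrange, Finset.coe_image, Finset.coe_univ, Set.image_univ]

lemma sum_simples {M : Type*} [AddCommMonoid M] (f : V → M) :
    ∑ α ∈ C.R.simples, f α = ∑ k ∈ Finset.range C.n, f (C.E k) := by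
  rw [C.simples_eq, Finset.sum_image (fun a _ b _ h => C.he h)]
  rw [← Fin.sum_univ_eq_sum_range (fun k => f (C.E k))]
  refine Finset.sum_congr rfl fun i _ => ?_
  rw [C.E_eq i.1 i.2]

lemma E_mem_simples {k : ℕ} (h : k < C.n) : C.E k ∈ C.R.simples := by
  rw [C.simples_eq, C.E_eq k h]
  exact Finset.mem_image_of_mem _ (Finset.mem_univ _)

lemma E_root {k : ℕ} (h : k < C.n) : C.E k ∈ C.R.roots :=
  C.R.simples_sub (C.E_mem_simples h)

lemma E_inj {k m : ℕ} (hk : k < C.n) (hm : m < C.n) (h : C.E k = C.E m) : k = m := by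
  rw [C.E_eq k hk, C.E_eq m hm] at h
  exact congrArg Fin.val (C.he h)

lemma indepE : LinearIndependent ℝ C.e := by
  have h := C.R.simples_indep
  have : C.e = (Subtype.val : {x : V // x ∈ C.R.simples} → V) ∘
      (fun i => ⟨C.e i, by rw [← Finset.mem_coe, C.hrange]; exact Set.mem_range_self i⟩) := rfl
  rw [this]
  exact h.comp _ (fun i j hij => C.he (congrArg Subtype.val hij))

lemma unique_coords (c d : ℕ → ℝ)
    (h : ∑ k ∈ Finset.range C.n, c k • C.E k = ∑ k ∈ Finset.range C.n, d k • C.E k) :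
    ∀ k < C.n, c k = d k := by
  have h2 : ∑ i : Fin C.n, (c i.1 - d i.1) • C.e i = 0 := by
    have := sub_eq_zero_of_eq h
    rw [← Finset.sum_sub_distrib] at this
    rw [← Fin.sum_univ_eq_sum_range (fun k => c k • C.E k - d k • C.E k)] at this
    simpa [sub_smul, C.E_eq] using this
  intro k hk
  have := (Fintype.linearIndependent_iff.mp C.indepE) _ h2 ⟨k, hk⟩
  linarith [this]

end TypeACtx
end Aux
namespace TypeACtx
open Finset
open scoped Classical

variable {V : Type} [NormedAddCommGroup V] [InnerProductSpace ℝ V] [FiniteDimensional ℝ V]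
variable (C : TypeACtx V)

noncomputable def A : ℝ := ⟪C.E 0, C.E 0⟫_ℝ

lemma npos : 0 < C.n := C.hn

lemma Apos : 0 < C.A := by
  have h : C.E 0 ≠ 0 := C.R.nonzero _ (C.E_root C.npos)
  rw [A, real_inner_self_eq_norm_sq]
  exact pow_pos (norm_pos_iff.mpr h) 2

lemma inner_self_root {γ : V} (hγ : γ ∈ C.R.roots) : ⟪γ, γ⟫_ℝ = C.A := by
  have h := C.hlaced γ hγ (C.E 0) (C.E_root C.npos)
  rw [A, real_inner_self_eq_norm_sq, real_inner_self_eq_norm_sq, h]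

lemma neg_root {γ : V} (hγ : γ ∈ C.R.roots) : -γ ∈ C.R.roots := by
  have h := C.R.reflClosed γ hγ γ hγ
  have hne : ⟪γ, γ⟫_ℝ ≠ 0 := by rw [C.inner_self_root hγ]; exact ne_of_gt C.Apos
  have : (2 * ⟪γ, γ⟫_ℝ / ⟪γ, γ⟫_ℝ) = 2 := by field_simp
  rw [this] at h
  have h2 : γ - (2:ℝ) • γ = -γ := by module
  rwa [h2] at h

lemma sum_root_iff {γ β : V} (hγ : γ ∈ C.R.roots) (hβ : β ∈ C.R.roots) :
    γ + β ∈ C.R.roots ↔ 2 * ⟪γ, β⟫_ℝ = -C.A := by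
  constructor
  · intro h
    have := C.inner_self_root h
    rw [real_inner_add_add_self, C.inner_self_root hγ, C.inner_self_root hβ] at this
    linarith
  · intro h
    have hr := C.R.reflClosed β hβ γ hγ
    have hβA : ⟪β, β⟫_ℝ = C.A := C.inner_self_root hβ
    have hAne : C.A ≠ 0 := ne_of_gt C.Apos
    have hco : (2 * ⟪γ, β⟫_ℝ / ⟪β, β⟫_ℝ) = -1 := by
      rw [hβA, h]; field_simp
    rw [hco] at hr
    have h2 : γ - (-1 : ℝ) • β = γ + β := by module
    rwa [h2] at hr

lemma diff_root_iff {γ β : V} (hγ : γ ∈ C.R.roots) (hβ : β ∈ C.R.roots) :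
    γ - β ∈ C.R.roots ↔ 2 * ⟪γ, β⟫_ℝ = C.A := by
  have h := C.sum_root_iff hγ (C.neg_root hβ)
  rw [← sub_eq_add_neg, inner_neg_right] at h
  rw [h]; constructor <;> intro h2 <;> linarith

lemma pairing_int {γ β : V} (hγ : γ ∈ C.R.roots) (hβ : β ∈ C.R.roots) :
    ∃ k : ℤ, 2 * ⟪β, γ⟫_ℝ = (k : ℝ) * C.A := by
  obtain ⟨k, hk⟩ := C.R.crystal γ hγ β hβ
  refine ⟨k, ?_⟩
  have hA : ⟪γ, γ⟫_ℝ = C.A := C.inner_self_root hγ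
  have hAne : C.A ≠ 0 := ne_of_gt C.Apos
  rw [hA] at hk
  field_simp at hk
  linarith

lemma pairing_sq_le {γ β : V} (hγ : γ ∈ C.R.roots) (hβ : β ∈ C.R.roots) :
    (2 * ⟪β, γ⟫_ℝ) ^ 2 ≤ 4 * C.A ^ 2 := by
  have h := real_inner_mul_inner_self_le β γ
  rw [C.inner_self_root hγ, C.inner_self_root hβ] at h
  nlinarith [C.Apos]

/-- coordinates of a vector w.r.t. the simple basis, indexed by ℕ -/
noncomputable def cf (γ : V) (k : ℕ) : ℤ :=
  if h : k < C.n then C.R.coeff γ (C.e ⟨k, h⟩) else 0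

lemma cf_eq_coeff {γ : V} {k : ℕ} (h : k < C.n) : C.cf γ k = C.R.coeff γ (C.E k) := by
  rw [cf, dif_pos h, C.E_eq k h]

lemma expand_cf {γ : V} (hγ : γ ∈ C.R.roots) :
    γ = ∑ k ∈ Finset.range C.n, (C.cf γ k : ℝ) • C.E k := by
  have h := C.R.coeff_spec γ hγ
  rw [C.sum_simples (fun α => C.R.coeff γ α • α)] at h
  conv_lhs => rw [h]
  refine Finset.sum_congr rfl fun k hk => ?_
  rw [C.cf_eq_coeff (Finset.mem_range.mp hk), Int.cast_smul_eq_zsmul]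

lemma coords_eq_cf {γ : V} (hγ : γ ∈ C.R.roots) (c : ℕ → ℤ)
    (h : γ = ∑ k ∈ Finset.range C.n, (c k : ℝ) • C.E k) : ∀ k < C.n, C.cf γ k = c k := by
  intro k hk
  have h2 := C.unique_coords (fun k => (C.cf γ k : ℝ)) (fun k => (c k : ℝ))
    (by rw [← C.expand_cf hγ, ← h]) k hk
  have h3 : ((C.cf γ k : ℝ)) = ((c k : ℝ)) := h2
  exact_mod_cast h3

lemma cf_sign {γ : V} (hγ : γ ∈ C.R.roots) :
    (∀ k < C.n, 0 ≤ C.cf γ k) ∨ (∀ k < C.n, C.cf γ k ≤ 0) := by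
  rcases C.R.coeff_sign γ hγ with h | h
  · exact Or.inl fun k hk => (C.cf_eq_coeff hk) ▸ h _ (C.E_mem_simples hk)
  · exact Or.inr fun k hk => (C.cf_eq_coeff hk) ▸ h _ (C.E_mem_simples hk)

lemma mem_posRoots_iff {γ : V} :
    γ ∈ C.R.posRoots ↔ γ ∈ C.R.roots ∧ ∀ k < C.n, 0 ≤ C.cf γ k := by
  constructor
  · rintro ⟨h1, h2⟩
    exact ⟨h1, fun k hk => (C.cf_eq_coeff hk) ▸ h2 _ (C.E_mem_simples hk)⟩
  · rintro ⟨h1, h2⟩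
    refine ⟨h1, fun α hα => ?_⟩
    have : α ∈ Set.range C.e := by rw [← C.hrange]; exact hα
    obtain ⟨i, rfl⟩ := this
    have := h2 i.1 i.2
    rwa [C.cf_eq_coeff i.2, C.E_eq i.1 i.2] at this

/-- sum over range n of a function supported on two points -/
lemma sum_two {k m : ℕ} (hk : k < C.n) (hm : m < C.n) (hkm : k ≠ m) (x y : ℝ) :
    ∑ j ∈ Finset.range C.n, (if j = k then x else if j = m then y else 0) • C.E j
      = x • C.E k + y • C.E m := by
  rw [← Finset.sum_subset (s₁ := {k, m}) (by
        intro j hj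
        rcases Finset.mem_insert.mp hj with rfl | hj
        · exact Finset.mem_range.mpr hk
        · rw [Finset.mem_singleton.mp hj]; exact Finset.mem_range.mpr hm)
      (by intro j _ hj
          simp only [Finset.mem_insert, Finset.mem_singleton, not_or] at hj
          rw [if_neg hj.1, if_neg hj.2, zero_smul])]
  rw [Finset.sum_pair hkm]
  simp [hkm, Ne.symm hkm]

lemma sum_one {k : ℕ} (hk : k < C.n) (x : ℝ) :
    ∑ j ∈ Finset.range C.n, (if j = k then x else 0) • C.E j = x • C.E k := by
  rw [← Finset.sum_subset (s₁ := {k}) (by simpa using hk)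
      (by intro j _ hj
          rw [Finset.mem_singleton] at hj
          rw [if_neg hj, zero_smul])]
  simp

end TypeACtx
namespace TypeACtx
open Finset
open scoped Classical

variable {V : Type} [NormedAddCommGroup V] [InnerProductSpace ℝ V] [FiniteDimensional ℝ V]
variable (C : TypeACtx V)

lemma inner_EE_nonadj {k m : ℕ} (hk : k < C.n) (hm : m < C.n) (hkm : k ≠ m)
    (hnadj : ¬(k + 1 = m ∨ m + 1 = k)) : ⟪C.E k, C.E m⟫_ℝ = 0 := by
  by_contra h
  rw [C.E_eq k hk, C.E_eq m hm] at h
  exact hnadj ((C.hadj ⟨k, hk⟩ ⟨m, hm⟩ (fun hh => hkm (congrArg Fin.val hh))).mp h)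

lemma eq_of_inner_sub_zero {x y : V} (hx : ⟪x, x⟫_ℝ = C.A) (hy : ⟪y, y⟫_ℝ = C.A)
    (h : 2 * ⟪x, y⟫_ℝ = 2 * C.A) : x = y := by
  have h2 : ⟪x - y, x - y⟫_ℝ = 0 := by
    rw [real_inner_sub_sub_self, hx, hy]; linarith
  have := inner_self_eq_zero.mp h2
  rwa [sub_eq_zero] at this

lemma inner_EE_adj {k m : ℕ} (hk : k < C.n) (hm : m < C.n)
    (hadjkm : k + 1 = m ∨ m + 1 = k) : 2 * ⟪C.E k, C.E m⟫_ℝ = -C.A := by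
  have hkm : k ≠ m := by omega
  obtain ⟨c, hc⟩ := C.pairing_int (C.E_root hm) (C.E_root hk)
  have hAk : ⟪C.E k, C.E k⟫_ℝ = C.A := C.inner_self_root (C.E_root hk)
  have hAm : ⟪C.E m, C.E m⟫_ℝ = C.A := C.inner_self_root (C.E_root hm)
  have hApos := C.Apos
  have hcne : c ≠ 0 := by
    intro h0
    rw [h0] at hc
    have : ⟪C.E k, C.E m⟫_ℝ = 0 := by push_cast at hc; linarith
    rw [C.E_eq k hk, C.E_eq m hm] at this
    exact ((C.hadj ⟨k, hk⟩ ⟨m, hm⟩ (fun hh => hkm (congrArg Fin.val hh))).mpr hadjkm) this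
  have hsq := C.pairing_sq_le (C.E_root hm) (C.E_root hk)
  rw [hc] at hsq
  have hcsq : (c : ℝ) ^ 2 ≤ 4 := by nlinarith [pow_pos hApos 2]
  have hzsq : c ^ 2 ≤ 4 := by exact_mod_cast hcsq
  have hc2 : -2 ≤ c ∧ c ≤ 2 := by constructor <;> nlinarith [hzsq]
  have hcne2 : c ≠ 2 := by
    intro h2
    rw [h2] at hc
    have := C.eq_of_inner_sub_zero hAk hAm (by push_cast at hc; linarith)
    exact hkm (C.E_inj hk hm this)
  have hcnem2 : c ≠ -2 := by
    intro h2
    rw [h2] at hc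
    have hz : C.E k + C.E m = 0 := by
      have h3 : ⟪C.E k + C.E m, C.E k + C.E m⟫_ℝ = 0 := by
        rw [real_inner_add_add_self, hAk, hAm]; push_cast at hc; linarith
      exact inner_self_eq_zero.mp h3
    have hs := C.sum_two hk hm hkm 1 1
    simp only [one_smul] at hs
    have := C.unique_coords (fun j => if j = k then 1 else if j = m then 1 else 0)
      (fun _ => 0) (by rw [hs, hz]; simp) k hk
    simp at this
  have hcne1 : c ≠ 1 := by
    intro h1
    rw [h1] at hc
    have hδ : C.E k - C.E m ∈ C.R.roots := by
      rw [C.diff_root_iff (C.E_root hk) (C.E_root hm)]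
      push_cast at hc; linarith
    have hs := C.sum_two hk hm hkm 1 (-1)
    have hδeq : C.E k - C.E m =
        ∑ j ∈ Finset.range C.n,
          (((if j = k then (1 : ℤ) else if j = m then -1 else 0) : ℤ) : ℝ) • C.E j := by
      have hco : ∀ j, (((if j = k then (1:ℤ) else if j = m then -1 else 0) : ℤ) : ℝ) • C.E j
          = (if j = k then (1:ℝ) else if j = m then -1 else 0) • C.E j := by
        intro j; split_ifs <;> norm_num
      rw [Finset.sum_congr rfl (fun j _ => hco j), hs]
      module
    have hcf := C.coords_eq_cf hδ
      (fun j => if j = k then (1 : ℤ) else if j = m then -1 else 0) (by exact hδeq)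
    rcases C.cf_sign hδ with h | h
    · have := h m hm
      rw [hcf m hm] at this
      simp [Ne.symm hkm] at this
    · have := h k hk
      rw [hcf k hk] at this
      simp at this
  obtain ⟨hcl, hcr⟩ := hc2
  interval_cases c <;> simp_all <;> linarith

/-- the interval root `α_p + ⋯ + α_q` -/
noncomputable def iv (p q : ℕ) : V := ∑ k ∈ Finset.Icc p q, C.E k

lemma iv_self (p : ℕ) : C.iv p p = C.E p := by simp [iv]

lemma iv_split {p q r : ℕ} (h1 : p ≤ q) (h2 : q < r) :
    C.iv p q + C.iv (q + 1) r = C.iv p r := by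
  rw [iv, iv, iv, ← Finset.Ico_add_one_right_eq_Icc, ← Finset.Ico_add_one_right_eq_Icc, ← Finset.Ico_add_one_right_eq_Icc]
  exact Finset.sum_Ico_consecutive _ (by omega) (by omega)

lemma ip_two (p q m : ℕ) : 2 * ⟪C.iv p q, C.E m⟫_ℝ = ∑ k ∈ Finset.Icc p q, 2 * ⟪C.E k, C.E m⟫_ℝ := by
  rw [iv, sum_inner, Finset.mul_sum]

lemma ip_far {p q m : ℕ} (hq : q < C.n) (hm : m < C.n) (h : m + 1 < p ∨ q + 1 < m) :
    2 * ⟪C.iv p q, C.E m⟫_ℝ = 0 := by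
  rw [C.ip_two]
  refine Finset.sum_eq_zero fun k hk => ?_
  rw [Finset.mem_Icc] at hk
  rw [C.inner_EE_nonadj (by omega) hm (by omega) (by omega)]
  ring

lemma ip_adjL {p q m : ℕ} (hq : q < C.n) (hm : m < C.n) (hpq : p ≤ q) (h : m + 1 = p) :
    2 * ⟪C.iv p q, C.E m⟫_ℝ = -C.A := by
  rw [C.ip_two]
  rw [Finset.sum_eq_single_of_mem p (Finset.mem_Icc.mpr ⟨le_refl p, hpq⟩)]
  · exact C.inner_EE_adj (by omega) hm (by omega)
  · intro k hk hkp
    rw [Finset.mem_Icc] at hk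
    rw [C.inner_EE_nonadj (by omega) hm (by omega) (by omega)]
    ring

lemma ip_adjR {p q m : ℕ} (hm : m < C.n) (hpq : p ≤ q) (h : m = q + 1) :
    2 * ⟪C.iv p q, C.E m⟫_ℝ = -C.A := by
  rw [C.ip_two]
  rw [Finset.sum_eq_single_of_mem q (Finset.mem_Icc.mpr ⟨hpq, le_refl q⟩)]
  · exact C.inner_EE_adj (by omega) hm (by omega)
  · intro k hk hkp
    rw [Finset.mem_Icc] at hk
    rw [C.inner_EE_nonadj (by omega) hm (by omega) (by omega)]
    ring

lemma ip_endL {p q : ℕ} (hq : q < C.n) (hpq : p < q) :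
    2 * ⟪C.iv p q, C.E p⟫_ℝ = C.A := by
  have hsplit := C.iv_split (le_refl p) hpq
  rw [← hsplit, inner_add_left, iv_self]
  have h1 : ⟪C.E p, C.E p⟫_ℝ = C.A := C.inner_self_root (C.E_root (by omega))
  have h2 := C.ip_adjL hq (show p < C.n by omega) (show p + 1 ≤ q by omega) rfl
  linarith

lemma ip_endR {p q : ℕ} (hq : q < C.n) (hpq : p < q) :
    2 * ⟪C.iv p q, C.E q⟫_ℝ = C.A := by
  have hsplit := C.iv_split (show p ≤ q - 1 by omega) (show q - 1 < q by omega)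
  rw [show q - 1 + 1 = q by omega] at hsplit
  rw [← hsplit, inner_add_left, iv_self]
  have h1 : ⟪C.E q, C.E q⟫_ℝ = C.A := C.inner_self_root (C.E_root hq)
  have h2 := C.ip_adjR (show q < C.n by omega) (show p ≤ q - 1 by omega) (by omega)
  linarith

lemma ip_mid {p q m : ℕ} (hq : q < C.n) (h1 : p < m) (h2 : m < q) :
    2 * ⟪C.iv p q, C.E m⟫_ℝ = 0 := by
  have hsplit := C.iv_split (show p ≤ m by omega) h2
  rw [← hsplit, inner_add_left]
  have ha := C.ip_endR (show m < C.n by omega) h1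
  have hb := C.ip_adjL hq (show m < C.n by omega) (show m + 1 ≤ q by omega) rfl
  linarith

lemma ip_self2 {p : ℕ} (hp : p < C.n) : 2 * ⟪C.iv p p, C.E p⟫_ℝ = 2 * C.A := by
  rw [iv_self]
  have := C.inner_self_root (C.E_root hp)
  linarith

lemma adj_of_ip {p q m : ℕ} (hpq : p ≤ q) (hq : q < C.n) (hm : m < C.n)
    (h : 2 * ⟪C.iv p q, C.E m⟫_ℝ = -C.A) : m + 1 = p ∨ m = q + 1 := by
  have hApos := C.Apos
  by_contra hcon
  push_neg at hcon
  rcases Nat.lt_or_ge (m + 1) p with h1 | h1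
  · have := C.ip_far hq hm (Or.inl h1); linarith
  rcases Nat.lt_or_ge (q + 1) m with h2 | h2
  · have := C.ip_far (p := p) hq hm (Or.inr h2); linarith
  -- now p ≤ m ≤ q
  have hpm : p ≤ m := by omega
  have hmq : m ≤ q := by omega
  rcases eq_or_lt_of_le hpm with rfl | hpm'
  · rcases eq_or_lt_of_le hmq with rfl | hmq'
    · have := C.ip_self2 hm; linarith
    · have := C.ip_endL hq hmq'; linarith
  · rcases eq_or_lt_of_le hmq with rfl | hmq'
    · have := C.ip_endR hq hpm'; linarith
    · have := C.ip_mid hq hpm' hmq'; linarith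

lemma iv_root {p q : ℕ} (hpq : p ≤ q) (hq : q < C.n) : C.iv p q ∈ C.R.roots := by
  obtain ⟨d, rfl⟩ : ∃ d, q = p + d := ⟨q - p, by omega⟩
  clear hpq
  induction d with
  | zero =>
    rw [show p + 0 = p by omega, iv_self]
    exact C.E_root (by omega)
  | succ d ih =>
    have hroot : C.iv p (p + d) ∈ C.R.roots := ih (by omega)
    have hsplit := C.iv_split (show p ≤ p + d by omega) (show p + d < p + (d+1) by omega)
    have hE : C.E (p + (d+1)) ∈ C.R.roots := C.E_root (by omega)
    rw [show p + d + 1 = p + (d + 1) by omega] at hsplit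
    rw [← hsplit, C.iv_self (p + (d+1))]
    rw [C.sum_root_iff hroot hE]
    exact C.ip_adjR (by omega) (by omega) rfl

end TypeACtx
namespace TypeACtx
open Finset
open scoped Classical

variable {V : Type} [NormedAddCommGroup V] [InnerProductSpace ℝ V] [FiniteDimensional ℝ V]
variable (C : TypeACtx V)

lemma ind_eq_iff {P Q : Prop} [Decidable P] [Decidable Q]
    (h : (if P then (1 : ℤ) else 0) = (if Q then 1 else 0)) : P ↔ Q := by
  split_ifs at h <;> first | tauto | omega

lemma iv_coords {p q : ℕ} (hq : q < C.n) :
    C.iv p q = ∑ j ∈ Finset.range C.n,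
      (((if p ≤ j ∧ j ≤ q then (1 : ℤ) else 0) : ℤ) : ℝ) • C.E j := by
  rw [iv, ← Finset.sum_subset (s₁ := Finset.Icc p q)
    (fun j hj => Finset.mem_range.mpr (by rw [Finset.mem_Icc] at hj; omega))
    (fun j _ hj => by
      rw [Finset.mem_Icc] at hj
      rw [if_neg (by omega)]; norm_num)]
  refine Finset.sum_congr rfl fun j hj => ?_
  rw [Finset.mem_Icc] at hj
  rw [if_pos hj]; norm_num

lemma cf_iv {p q : ℕ} (hpq : p ≤ q) (hq : q < C.n) :
    ∀ k < C.n, C.cf (C.iv p q) k = if p ≤ k ∧ k ≤ q then 1 else 0 :=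
  C.coords_eq_cf (C.iv_root hpq hq) _ (by exact C.iv_coords hq)

lemma iv_posRoot {p q : ℕ} (hpq : p ≤ q) (hq : q < C.n) : C.iv p q ∈ C.R.posRoots := by
  rw [C.mem_posRoots_iff]
  refine ⟨C.iv_root hpq hq, fun k hk => ?_⟩
  rw [C.cf_iv hpq hq k hk]
  split_ifs <;> omega

lemma iv_inj {p q p' q' : ℕ} (hpq : p ≤ q) (hq : q < C.n) (hpq' : p' ≤ q') (hq' : q' < C.n)
    (h : C.iv p q = C.iv p' q') : p = p' ∧ q = q' := by
  have hc := C.coords_eq_cf (C.iv_root hpq hq)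
    (fun k => if p' ≤ k ∧ k ≤ q' then 1 else 0) (by rw [h]; exact C.iv_coords hq')
  have h1 := hc p (by omega)
  have h2 := hc q hq
  have h3 := hc p' (by omega)
  have h4 := hc q' hq'
  rw [C.cf_iv hpq hq p (by omega)] at h1
  rw [C.cf_iv hpq hq q hq] at h2
  rw [C.cf_iv hpq hq p' (by omega)] at h3
  rw [C.cf_iv hpq hq q' hq'] at h4
  have k1 := ind_eq_iff h1
  have k2 := ind_eq_iff h2
  have k3 := ind_eq_iff h3
  have k4 := ind_eq_iff h4
  have m1 := k1.mp ⟨le_refl p, hpq⟩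
  have m2 := k2.mp ⟨hpq, le_refl q⟩
  have m3 := k3.mpr ⟨le_refl p', hpq'⟩
  have m4 := k4.mpr ⟨hpq', le_refl q'⟩
  omega

lemma E_coords {i : ℕ} (hi : i < C.n) :
    C.E i = ∑ j ∈ Finset.range C.n, (((if j = i then (1 : ℤ) else 0) : ℤ) : ℝ) • C.E j := by
  have hs := C.sum_one hi 1
  rw [one_smul] at hs
  rw [← hs]
  refine Finset.sum_congr rfl fun j _ => ?_
  split_ifs <;> norm_num

lemma cf_E {i : ℕ} (hi : i < C.n) :
    ∀ k < C.n, C.cf (C.E i) k = if k = i then 1 else 0 :=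
  C.coords_eq_cf (C.E_root hi) _ (by exact C.E_coords hi)

/-- the height of a root -/
noncomputable def ht (γ : V) : ℤ := ∑ k ∈ Finset.range C.n, C.cf γ k

lemma ht_pos {γ : V} (hγ : γ ∈ C.R.posRoots) : 1 ≤ C.ht γ := by
  rw [C.mem_posRoots_iff] at hγ
  obtain ⟨hroot, hcf⟩ := hγ
  have hnn : ∀ k ∈ Finset.range C.n, 0 ≤ C.cf γ k :=
    fun k hk => hcf k (Finset.mem_range.mp hk)
  by_contra h
  push_neg at h
  have hz : C.ht γ = 0 := le_antisymm (by omega) (Finset.sum_nonneg hnn)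
  have hall : ∀ k ∈ Finset.range C.n, C.cf γ k = 0 :=
    (Finset.sum_eq_zero_iff_of_nonneg hnn).mp hz
  have : γ = 0 := by
    rw [C.expand_cf hroot]
    refine Finset.sum_eq_zero fun k hk => ?_
    rw [hall k hk]; norm_num
  exact C.R.nonzero γ hroot this

lemma exists_dec {γ : V} (hγ : γ ∈ C.R.posRoots) :
    ∃ i < C.n, 0 < C.cf γ i ∧ 0 < ⟪γ, C.E i⟫_ℝ := by
  have hroot := hγ.1
  have hcf := (C.mem_posRoots_iff.mp hγ).2
  by_contra h
  push_neg at h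
  have hA : ⟪γ, γ⟫_ℝ = C.A := C.inner_self_root hroot
  have hexp' : ∀ δ : V, ⟪γ, δ⟫_ℝ = ∑ k ∈ Finset.range C.n, (C.cf γ k : ℝ) * ⟪C.E k, δ⟫_ℝ := by
    intro δ
    conv_lhs => rw [C.expand_cf hroot]
    rw [sum_inner]
    exact Finset.sum_congr rfl fun k _ => real_inner_smul_left _ _ _
  have hexp := hexp' γ
  have hnp : ∀ k ∈ Finset.range C.n, (C.cf γ k : ℝ) * ⟪C.E k, γ⟫_ℝ ≤ 0 := by
    intro k hk
    rw [Finset.mem_range] at hk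
    rcases eq_or_lt_of_le (hcf k hk) with h0 | h0
    · rw [← h0]; norm_num
    · have h2 := h k hk h0
      rw [real_inner_comm]
      exact mul_nonpos_of_nonneg_of_nonpos (by exact_mod_cast h0.le) h2
  have hsum := Finset.sum_nonpos hnp
  rw [← hexp, hA] at hsum
  exact absurd hsum (not_le.mpr C.Apos)

end TypeACtx
namespace TypeACtx
open Finset
open scoped Classical

variable {V : Type} [NormedAddCommGroup V] [InnerProductSpace ℝ V] [FiniteDimensional ℝ V]
variable (C : TypeACtx V)

lemma pos_classify {γ : V} (hγ : γ ∈ C.R.posRoots) :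
    ∃ p q, p ≤ q ∧ q < C.n ∧ γ = C.iv p q := by
  obtain ⟨N, hN⟩ : ∃ N : ℕ, C.ht γ ≤ N := ⟨(C.ht γ).toNat, Int.self_le_toNat _⟩
  induction N generalizing γ with
  | zero => have := C.ht_pos hγ; omega
  | succ N ih =>
    obtain ⟨i, hi, hcfi, hip⟩ := C.exists_dec hγ
    have hroot := hγ.1
    have hApos := C.Apos
    by_cases hEi : γ = C.E i
    · exact ⟨i, i, le_refl i, hi, by rw [hEi, iv_self]⟩
    obtain ⟨c, hc⟩ := C.pairing_int (C.E_root hi) hroot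
    have hc1 : 0 < c := by
      by_contra hcn
      push_neg at hcn
      have : ((c : ℝ)) ≤ 0 := by exact_mod_cast hcn
      nlinarith
    have hsq := C.pairing_sq_le (C.E_root hi) hroot
    rw [hc] at hsq
    have hcsq : (c : ℝ) ^ 2 ≤ 4 := by nlinarith [pow_pos hApos 2]
    have hzsq : c ^ 2 ≤ 4 := by exact_mod_cast hcsq
    have hc2 : c ≤ 2 := by nlinarith
    have hcne2 : c ≠ 2 := by
      intro h2
      rw [h2] at hc
      exact hEi (C.eq_of_inner_sub_zero (C.inner_self_root hroot)
        (C.inner_self_root (C.E_root hi)) (by push_cast at hc; linarith))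
    have hceq : c = 1 := by omega
    rw [hceq] at hc
    have hδ : γ - C.E i ∈ C.R.roots := by
      rw [C.diff_root_iff hroot (C.E_root hi)]
      push_cast at hc; linarith
    have hδeq : γ - C.E i = ∑ k ∈ Finset.range C.n,
        (((C.cf γ k - if k = i then 1 else 0 : ℤ)) : ℝ) • C.E k := by
      conv_lhs => rw [C.expand_cf hroot, C.E_coords hi]
      rw [← Finset.sum_sub_distrib]
      refine Finset.sum_congr rfl fun k _ => ?_
      push_cast
      rw [sub_smul]
    have hcfδ : ∀ k, k < C.n → C.cf (γ - C.E i) k = C.cf γ k - (if k = i then 1 else 0) :=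
      C.coords_eq_cf hδ (fun k => C.cf γ k - if k = i then 1 else 0) (by exact hδeq)
    have hγpos := (C.mem_posRoots_iff.mp hγ).2
    have hδpos : γ - C.E i ∈ C.R.posRoots := by
      rw [C.mem_posRoots_iff]
      refine ⟨hδ, fun k hk => ?_⟩
      rcases C.cf_sign hδ with h | h
      · exact h k hk
      · exfalso
        apply hEi
        have hind : ∀ k < C.n, C.cf γ k = if k = i then 1 else 0 := by
          intro k hk
          have h1 := h k hk
          rw [hcfδ k hk] at h1
          have h2 := hγpos k hk
          by_cases hki : k = i
          · rw [if_pos hki]; subst hki; omega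
          · rw [if_neg hki]; rw [if_neg hki] at h1; omega
        rw [C.expand_cf hroot, C.E_coords hi]
        exact Finset.sum_congr rfl fun k hk => by
          rw [hind k (Finset.mem_range.mp hk)]
    have hhtδ : C.ht (γ - C.E i) ≤ N := by
      have hsum : C.ht (γ - C.E i) = C.ht γ - 1 := by
        rw [ht, ht, Finset.sum_congr rfl (fun k hk => hcfδ k (Finset.mem_range.mp hk)),
          Finset.sum_sub_distrib, Finset.sum_ite_eq' (Finset.range C.n) i (fun _ => 1),
          if_pos (Finset.mem_range.mpr hi)]
      omega
    obtain ⟨p, q, hpq, hq, hivδ⟩ := ih hδpos hhtδ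
    have hγeq : γ = C.iv p q + C.E i := by rw [← hivδ]; abel
    have hipq : 2 * ⟪C.iv p q, C.E i⟫_ℝ = -C.A := by
      rw [← C.sum_root_iff (C.iv_root hpq hq) (C.E_root hi), ← hγeq]
      exact hroot
    rcases C.adj_of_ip hpq hq hi hipq with h | h
    · refine ⟨i, q, by omega, hq, ?_⟩
      have hsp := C.iv_split (le_refl i) (show i < q by omega)
      rw [iv_self, h] at hsp
      rw [hγeq, ← hsp]
      abel
    · refine ⟨p, i, by omega, by omega, ?_⟩
      have := C.iv_split hpq (show q < i by omega)
      rw [show q + 1 = i by omega, iv_self] at this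
      rw [hγeq, ← this]

lemma sub_coords {μ ν : V} (hμ : μ ∈ C.R.roots) (hν : ν ∈ C.R.roots) :
    ν - μ = ∑ k ∈ Finset.range C.n, ((C.cf ν k - C.cf μ k : ℤ) : ℝ) • C.E k := by
  conv_lhs => rw [C.expand_cf hν, C.expand_cf hμ]
  rw [← Finset.sum_sub_distrib]
  refine Finset.sum_congr rfl fun k _ => ?_
  push_cast
  rw [sub_smul]

lemma rle_coords {μ ν : V} (hμ : μ ∈ C.R.roots) (hν : ν ∈ C.R.roots) :
    C.R.rle μ ν ↔ ∀ k < C.n, C.cf μ k ≤ C.cf ν k := by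
  constructor
  · rintro ⟨c, hc⟩
    intro k hk
    rw [C.sum_simples (fun α => ((c α : ℤ)) • α)] at hc
    have hc' : ν - μ = ∑ j ∈ Finset.range C.n, (((c (C.E j) : ℤ)) : ℝ) • C.E j := by
      rw [hc]
      exact Finset.sum_congr rfl fun j _ => (Int.cast_smul_eq_zsmul ℝ _ _).symm
    have hu := C.unique_coords (fun j => ((C.cf ν j - C.cf μ j : ℤ) : ℝ))
      (fun j => ((c (C.E j) : ℤ) : ℝ)) (by rw [← C.sub_coords hμ hν, ← hc']) k hk
    have h3 : ((C.cf ν k - C.cf μ k : ℤ) : ℝ) = ((c (C.E k) : ℤ) : ℝ) := hu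
    have h2 : (C.cf ν k - C.cf μ k : ℤ) = ((c (C.E k) : ℤ)) := by exact_mod_cast h3
    omega
  · intro h
    refine ⟨fun α => (C.R.coeff ν α - C.R.coeff μ α).toNat, ?_⟩
    rw [C.sum_simples (fun α => (((C.R.coeff ν α - C.R.coeff μ α).toNat : ℤ)) • α)]
    have hz : ∀ (z : ℤ) (v : V), (z : ℤ) • v = ((z : ℝ)) • v :=
      fun z v => (Int.cast_smul_eq_zsmul ℝ _ _).symm
    rw [C.sub_coords hμ hν]
    refine Finset.sum_congr rfl fun k hk => ?_
    have hk' := Finset.mem_range.mp hk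
    have h1 : C.R.coeff ν (C.E k) - C.R.coeff μ (C.E k) = C.cf ν k - C.cf μ k := by
      rw [C.cf_eq_coeff hk', C.cf_eq_coeff hk']
    rw [h1, Int.toNat_of_nonneg (by have := h k hk'; omega), hz]

lemma rle_iv {p q p' q' : ℕ} (hpq : p ≤ q) (hq : q < C.n) (hpq' : p' ≤ q') (hq' : q' < C.n) :
    C.R.rle (C.iv p q) (C.iv p' q') ↔ p' ≤ p ∧ q ≤ q' := by
  rw [C.rle_coords (C.iv_root hpq hq) (C.iv_root hpq' hq')]
  constructor
  · intro h
    have h1 := h p (by omega)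
    have h2 := h q hq
    rw [C.cf_iv hpq hq p (by omega), C.cf_iv hpq' hq' p (by omega),
      if_pos ⟨le_refl p, hpq⟩] at h1
    rw [C.cf_iv hpq hq q hq, C.cf_iv hpq' hq' q hq, if_pos ⟨hpq, le_refl q⟩] at h2
    constructor
    · by_contra hn; rw [if_neg (by omega)] at h1; omega
    · by_contra hn; rw [if_neg (by omega)] at h2; omega
  · intro ⟨h1, h2⟩ k hk
    rw [C.cf_iv hpq hq k hk, C.cf_iv hpq' hq' k hk]
    split_ifs <;> omega

lemma theta_eq : C.th = C.iv 0 (C.n - 1) := by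
  obtain ⟨p, q, hpq, hq, heq⟩ := C.pos_classify C.hth.1
  have hfull : C.R.rle (C.iv 0 (C.n - 1)) C.th :=
    C.hth.2 _ (C.iv_root (by omega) (by have := C.npos; omega))
  rw [heq] at hfull ⊢
  have := (C.rle_iv (by omega) (by have := C.npos; omega) hpq hq).mp hfull
  have hp : p = 0 := by omega
  have hqn : q = C.n - 1 := by have := C.npos; omega
  rw [hp, hqn]

lemma sum_iv_iff {p q p' q' : ℕ} (hpq : p ≤ q) (hq : q < C.n) (hpq' : p' ≤ q') (hq' : q' < C.n) :
    C.iv p q + C.iv p' q' ∈ C.R.roots ↔ (q + 1 = p' ∨ q' + 1 = p) := by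
  constructor
  · intro h
    have hσeq : C.iv p q + C.iv p' q' = ∑ k ∈ Finset.range C.n,
        ((((if p ≤ k ∧ k ≤ q then (1:ℤ) else 0) + (if p' ≤ k ∧ k ≤ q' then 1 else 0)) : ℤ) : ℝ)
          • C.E k := by
      rw [C.iv_coords hq, C.iv_coords hq', ← Finset.sum_add_distrib]
      refine Finset.sum_congr rfl fun k _ => ?_
      push_cast
      rw [add_smul]
    have hcfσ : ∀ k, k < C.n → C.cf (C.iv p q + C.iv p' q') k
        = (if p ≤ k ∧ k ≤ q then (1:ℤ) else 0) + (if p' ≤ k ∧ k ≤ q' then 1 else 0) :=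
      C.coords_eq_cf h
      (fun k => (if p ≤ k ∧ k ≤ q then (1:ℤ) else 0) + (if p' ≤ k ∧ k ≤ q' then 1 else 0))
      (by exact hσeq)
    have hσpos : C.iv p q + C.iv p' q' ∈ C.R.posRoots := by
      rw [C.mem_posRoots_iff]
      refine ⟨h, fun k hk => ?_⟩
      rw [hcfσ k hk]
      split_ifs <;> omega
    obtain ⟨r, s, hrs, hs, heq⟩ := C.pos_classify hσpos
    have key : ∀ k < C.n, (if p ≤ k ∧ k ≤ q then (1:ℤ) else 0) + (if p' ≤ k ∧ k ≤ q' then 1 else 0)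
        = (if r ≤ k ∧ k ≤ s then 1 else 0) := by
      intro k hk
      rw [← hcfσ k hk, heq, C.cf_iv hrs hs k hk]
    by_cases hcase : q < p'
    · left
      by_contra hne
      have e1 := key p (by omega)
      have e3 := key p' (by omega)
      have e5 := key (q + 1) (by omega)
      rw [if_pos ⟨le_refl p, hpq⟩] at e1
      rw [if_pos (show p' ≤ p' ∧ p' ≤ q' from ⟨le_refl p', hpq'⟩)] at e3
      rw [if_neg (by omega), if_neg (by omega)] at e5
      split_ifs at e1 e3 e5 <;> omega
    · have hq'p : q' < p := by
        have e2 := key q hq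
        have e3 := key p' (by omega)
        have e4 := key q' hq'
        rw [if_pos ⟨hpq, le_refl q⟩] at e2
        rw [if_pos (show p' ≤ p' ∧ p' ≤ q' from ⟨le_refl p', hpq'⟩)] at e3
        rw [if_pos (show p' ≤ q' ∧ q' ≤ q' from ⟨hpq', le_refl q'⟩)] at e4
        split_ifs at e2 e3 e4 <;> omega
      right
      by_contra hne
      have e1 := key p (by omega)
      have e3 := key p' (by omega)
      have e5 := key (q' + 1) (by omega)
      rw [if_pos ⟨le_refl p, hpq⟩] at e1
      rw [if_pos (show p' ≤ p' ∧ p' ≤ q' from ⟨le_refl p', hpq'⟩)] at e3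
      rw [if_neg (by omega), if_neg (by omega)] at e5
      split_ifs at e1 e3 e5 <;> omega
  · rintro (h | h)
    · have := C.iv_split hpq (show q < q' by omega)
      rw [h] at this
      rw [this]
      exact C.iv_root (by omega) hq'
    · have := C.iv_split hpq' (show q' < q by omega)
      rw [h] at this
      rw [add_comm, this]
      exact C.iv_root (by omega) hq

end TypeACtx
namespace TypeACtx
open Finset
open scoped Classical

variable {V : Type} [NormedAddCommGroup V] [InnerProductSpace ℝ V] [FiniteDimensional ℝ V]
variable (C : TypeACtx V)

lemma iv_sub_left {p q : ℕ} (h : p < q) : C.iv p q - C.E p = C.iv (p + 1) q := by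
  have hs := C.iv_split (le_refl p) h
  rw [iv_self] at hs
  rw [← hs, add_sub_cancel_left]

lemma iv_sub_right {p q : ℕ} (h : p < q) : C.iv p q - C.E q = C.iv p (q - 1) := by
  have hs := C.iv_split (show p ≤ q - 1 by omega) (show q - 1 < q by omega)
  rw [show q - 1 + 1 = q by omega, iv_self] at hs
  rw [← hs, add_sub_cancel_right]

lemma sub_pos_iff {p q u : ℕ} (hpq : p ≤ q) (hq : q < C.n) (hu : u < C.n) :
    C.iv p q - C.E u ∈ C.R.posRoots ↔ p < q ∧ (u = p ∨ u = q) := by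
  constructor
  · intro hδ
    have hδr : C.iv p q - C.E u ∈ C.R.roots := hδ.1
    have hδeq : C.iv p q - C.E u = ∑ k ∈ Finset.range C.n,
        ((((if p ≤ k ∧ k ≤ q then (1:ℤ) else 0) - (if k = u then 1 else 0)) : ℤ) : ℝ) • C.E k := by
      conv_lhs => rw [C.iv_coords hq, C.E_coords hu]
      rw [← Finset.sum_sub_distrib]
      refine Finset.sum_congr rfl fun k _ => ?_
      push_cast
      rw [sub_smul]
    have hcf : ∀ k, k < C.n → C.cf (C.iv p q - C.E u) k
        = (if p ≤ k ∧ k ≤ q then (1:ℤ) else 0) - (if k = u then 1 else 0) :=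
      C.coords_eq_cf hδr
        (fun k => (if p ≤ k ∧ k ≤ q then (1:ℤ) else 0) - (if k = u then 1 else 0)) (by exact hδeq)
    obtain ⟨r, s, hrs, hs, heq⟩ := C.pos_classify hδ
    have key : ∀ k, k < C.n → (if r ≤ k ∧ k ≤ s then (1:ℤ) else 0)
        = (if p ≤ k ∧ k ≤ q then (1:ℤ) else 0) - (if k = u then 1 else 0) := by
      intro k hk
      rw [← C.cf_iv hrs hs k hk, ← heq, hcf k hk]
    have hne : p ≠ q ∨ u ≠ p := by
      by_contra hcon
      push_neg at hcon
      obtain ⟨h1, h2⟩ := hcon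
      have : C.iv p q - C.E u = 0 := by rw [← h1, iv_self, h2, sub_self]
      exact C.R.nonzero _ hδr this
    have e1 := key u hu
    rw [if_pos rfl] at e1
    have hu_in : p ≤ u ∧ u ≤ q := by
      by_contra hh
      rw [if_neg hh] at e1
      split_ifs at e1 <;> omega
    by_cases hup : u = p
    · have hpneq : p ≠ q := by
        rcases hne with h | h
        · exact h
        · exact absurd hup h
      exact ⟨by omega, Or.inl hup⟩
    · by_cases huq : u = q
      · exact ⟨by omega, Or.inr huq⟩
      · exfalso
        have e2 := key p (by omega)
        have e3 := key q hq
        rw [if_pos (show p ≤ p ∧ p ≤ q from ⟨le_refl p, hpq⟩),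
          if_neg (by omega : ¬ p = u)] at e2
        rw [if_pos (show p ≤ q ∧ q ≤ q from ⟨hpq, le_refl q⟩),
          if_neg (by omega : ¬ q = u)] at e3
        split_ifs at e1 e2 e3 <;> omega
  · rintro ⟨h, (rfl | rfl)⟩
    · rw [C.iv_sub_left h]; exact C.iv_posRoot (by omega) hq
    · rw [C.iv_sub_right h]; exact C.iv_posRoot (by omega) (by omega)

/-- the index set of a subset of simple roots -/
noncomputable def TS (S : Finset V) : Finset ℕ :=
  (Finset.range C.n).filter (fun k => C.E k ∈ S)

lemma TS_lt {S : Finset V} {k : ℕ} (hk : k ∈ C.TS S) : k < C.n :=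
  Finset.mem_range.mp (Finset.mem_filter.mp hk).1

lemma S_eq_image {S : Finset V} (hS : S ⊆ C.R.simples) : S = (C.TS S).image C.E := by
  ext α
  constructor
  · intro hα
    have hαs := hS hα
    have : α ∈ Set.range C.e := by rw [← C.hrange]; exact hαs
    obtain ⟨i, rfl⟩ := this
    refine Finset.mem_image.mpr ⟨i.1, ?_, by rw [C.E_eq i.1 i.2]⟩
    rw [TS, Finset.mem_filter, Finset.mem_range]
    exact ⟨i.2, by rw [C.E_eq i.1 i.2]; exact hα⟩
  · intro hα
    obtain ⟨k, hk, rfl⟩ := Finset.mem_image.mp hα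
    exact (Finset.mem_filter.mp hk).2

lemma degS_count {S : Finset V} (hS : S ⊆ C.R.simples) (γ : V) :
    C.R.degS S γ = ∑ k ∈ C.TS S, C.cf γ k := by
  rw [RootSystemData.degS]
  conv_lhs => rw [C.S_eq_image hS]
  rw [Finset.sum_image (fun a ha b hb hab => C.E_inj (C.TS_lt ha) (C.TS_lt hb) hab)]
  exact Finset.sum_congr rfl fun k hk => (C.cf_eq_coeff (C.TS_lt hk)).symm

lemma degS_iv {S : Finset V} (hS : S ⊆ C.R.simples) {p q : ℕ} (hpq : p ≤ q) (hq : q < C.n) :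
    C.R.degS S (C.iv p q) = (((C.TS S)).filter (fun k => p ≤ k ∧ k ≤ q)).card := by
  rw [C.degS_count hS]
  rw [Finset.sum_congr rfl (fun k hk => C.cf_iv hpq hq k (C.TS_lt hk))]
  rw [Finset.sum_boole]

lemma degS_theta {S : Finset V} (hS : S ⊆ C.R.simples) :
    C.R.degS S C.th = (C.TS S).card := by
  rw [C.theta_eq, C.degS_iv hS (by have := C.npos; omega) (by have := C.npos; omega)]
  have hf : (C.TS S).filter (fun k => 0 ≤ k ∧ k ≤ C.n - 1) = C.TS S := by
    apply Finset.filter_true_of_mem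
    intro k hk
    have := C.TS_lt hk
    omega
  rw [hf]

lemma cf_add {γ₁ γ₂ : V} (h1 : γ₁ ∈ C.R.roots) (h2 : γ₂ ∈ C.R.roots)
    (h : γ₁ + γ₂ ∈ C.R.roots) : ∀ k, k < C.n → C.cf (γ₁ + γ₂) k = C.cf γ₁ k + C.cf γ₂ k := by
  refine C.coords_eq_cf h (fun k => C.cf γ₁ k + C.cf γ₂ k) ?_
  conv_lhs => rw [C.expand_cf h1, C.expand_cf h2]
  rw [← Finset.sum_add_distrib]
  refine Finset.sum_congr rfl fun k _ => ?_
  push_cast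
  rw [add_smul]

lemma cf_sub {γ₁ γ₂ : V} (h1 : γ₁ ∈ C.R.roots) (h2 : γ₂ ∈ C.R.roots)
    (h : γ₁ - γ₂ ∈ C.R.roots) : ∀ k, k < C.n → C.cf (γ₁ - γ₂) k = C.cf γ₁ k - C.cf γ₂ k :=
  C.coords_eq_cf h (fun k => C.cf γ₁ k - C.cf γ₂ k) (by exact C.sub_coords h2 h1)

lemma deg_le_theta {S : Finset V} (hS : S ⊆ C.R.simples) {γ : V} (hγ : γ ∈ C.R.roots) :
    C.R.degS S γ ≤ C.R.degS S C.th := by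
  rw [C.degS_count hS, C.degS_count hS]
  refine Finset.sum_le_sum fun k hk => ?_
  exact (C.rle_coords hγ C.hth.1.1).mp (C.hth.2 γ hγ) k (C.TS_lt hk)

lemma idealS_upper (S : Finset V) (hS : S ⊆ C.R.simples) :
    C.R.IsUpperIdeal (C.R.idealS S C.th) := by
  constructor
  · exact fun γ hγ => hγ.1
  · rintro ν ⟨hν1, hν2⟩ γ hγ hrle
    refine ⟨hγ, le_trans hν2 ?_⟩
    rw [C.degS_count hS, C.degS_count hS]
    refine Finset.sum_le_sum fun k hk => ?_
    exact (C.rle_coords hν1.1 hγ.1).mp hrle k (C.TS_lt hk)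

lemma idealS_abelian (S : Finset V) (hS : S ⊆ C.R.simples) :
    C.R.IsAbelianIdeal (C.R.idealS S C.th) := by
  refine ⟨C.idealS_upper S hS, ?_⟩
  rintro γ₁ ⟨hγ₁, hd₁⟩ γ₂ ⟨hγ₂, hd₂⟩ hsum
  have hadd : C.R.degS S (γ₁ + γ₂) = C.R.degS S γ₁ + C.R.degS S γ₂ := by
    rw [C.degS_count hS, C.degS_count hS, C.degS_count hS, ← Finset.sum_add_distrib]
    exact Finset.sum_congr rfl fun k hk => C.cf_add hγ₁.1 hγ₂.1 hsum k (C.TS_lt hk)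
  have hle := C.deg_le_theta hS hsum
  omega

lemma deg_E_notin {S : Finset V} (hS : S ⊆ C.R.simples) {u : ℕ} (hu : u < C.n)
    (hnotin : C.E u ∉ S) : C.R.degS S (C.E u) = 0 := by
  rw [C.degS_count hS]
  refine Finset.sum_eq_zero fun k hk => ?_
  rw [C.cf_E hu k (C.TS_lt hk), if_neg ?_]
  intro h
  subst h
  exact hnotin (Finset.mem_filter.mp hk).2

lemma normS_sub (S : Finset V) (hS : S ⊆ C.R.simples) :
    C.R.normS (C.R.idealS S C.th) ⊆ ↑S := by
  rintro α ⟨hαs, γ, hγmin, hcase⟩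
  by_contra hαS
  have hr : α ∈ Set.range C.e := by rw [← C.hrange]; exact hαs
  obtain ⟨i, rfl⟩ := hr
  have hu : i.1 < C.n := i.2
  have hαE : C.e i = C.E i.1 := (C.E_eq i.1 i.2).symm
  rw [hαE] at hαs hαS hcase
  have hdeg0 : C.R.degS S (C.E i.1) = 0 := C.deg_E_notin hS hu hαS
  have hd0 : 0 ≤ C.R.degS S C.th := by
    rw [C.degS_theta hS]; positivity
  have hEroot : C.E i.1 ∈ C.R.roots := C.E_root hu
  rcases hcase with hsub | hEq
  · have hγI := hγmin.1
    have hγpos := hγI.1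
    have hγd := hγI.2
    have hδroot : γ - C.E i.1 ∈ C.R.roots := hsub.1
    have hcfE0 : ∀ k ∈ C.TS S, C.cf (C.E i.1) k = 0 := by
      intro k hk
      rw [C.cf_E hu k (C.TS_lt hk), if_neg ?_]
      intro h
      subst h
      exact hαS (Finset.mem_filter.mp hk).2
    have hδdeg : C.R.degS S (γ - C.E i.1) = C.R.degS S γ := by
      rw [C.degS_count hS, C.degS_count hS]
      refine Finset.sum_congr rfl fun k hk => ?_
      rw [C.cf_sub hγpos.1 hEroot hδroot k (C.TS_lt hk), hcfE0 k hk, sub_zero]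
    have hδI : γ - C.E i.1 ∈ C.R.idealS S C.th := ⟨hsub, by rw [hδdeg]; exact hγd⟩
    have hrle : C.R.rle (γ - C.E i.1) γ := by
      rw [C.rle_coords hδroot hγpos.1]
      intro k hk
      rw [C.cf_sub hγpos.1 hEroot hδroot k hk, C.cf_E hu k hk]
      split_ifs <;> omega
    have heq2 := hγmin.2 _ hδI hrle
    have hz : C.E i.1 = 0 := by
      have h2 : γ - C.E i.1 = γ - 0 := by rw [heq2, sub_zero]
      exact sub_right_injective h2
    exact C.R.nonzero _ hEroot hz
  · have hγI := hγmin.1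
    have hγd := hγI.2
    rw [hEq, hdeg0] at hγd
    omega
end TypeACtx
namespace TypeACtx
open Finset
open scoped Classical

variable {V : Type} [NormedAddCommGroup V] [InnerProductSpace ℝ V] [FiniteDimensional ℝ V]
variable (C : TypeACtx V)

lemma nat_ivt (f : ℕ → ℕ) (hstep : ∀ b, f (b + 1) ≤ f b + 1) (t B m : ℕ)
    (htB : t ≤ B) (h1 : f t ≤ m) (h2 : m ≤ f B) :
    ∃ b, t ≤ b ∧ b ≤ B ∧ f b = m ∧ (b = t ∨ (t ≤ b - 1 ∧ f (b - 1) < f b)) := by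
  have hex : ∃ c, m ≤ f (t + c) := ⟨B - t, by rw [Nat.add_sub_cancel' htB]; exact h2⟩
  have hc₀ : m ≤ f (t + Nat.find hex) := Nat.find_spec hex
  have hle : Nat.find hex ≤ B - t := Nat.find_min' hex (m := B - t)
    (by rw [Nat.add_sub_cancel' htB]; exact h2)
  rcases Nat.eq_zero_or_pos (Nat.find hex) with h0 | hpos
  · refine ⟨t, le_refl t, htB, ?_, Or.inl rfl⟩
    rw [h0, Nat.add_zero] at hc₀
    omega
  · obtain ⟨c, hc⟩ : ∃ c, Nat.find hex = c + 1 := ⟨Nat.find hex - 1, by omega⟩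
    have hmin := Nat.find_min hex (m := c) (by omega)
    push_neg at hmin
    have hs := hstep (t + c)
    rw [hc] at hc₀ hle
    rw [show t + (c + 1) = t + c + 1 by omega] at hc₀
    refine ⟨t + c + 1, by omega, by omega, by omega, Or.inr ⟨by omega, ?_⟩⟩
    rw [show t + c + 1 - 1 = t + c by omega]
    omega

lemma window_right {T : Finset ℕ} (hT : ∀ x ∈ T, x < C.n) {t m : ℕ} (ht : t ∈ T)
    (hm : 1 ≤ m) (hmr : m ≤ (T.filter (fun x => t ≤ x)).card) :
    ∃ b ∈ T, t ≤ b ∧ (T.filter (fun x => t ≤ x ∧ x ≤ b)).card = m := by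
  set f : ℕ → ℕ := fun b => (T.filter (fun x => t ≤ x ∧ x ≤ b)).card with hf
  have hstep : ∀ b, f (b + 1) ≤ f b + 1 := by
    intro b
    have hsub : T.filter (fun x => t ≤ x ∧ x ≤ b + 1)
        ⊆ insert (b + 1) (T.filter (fun x => t ≤ x ∧ x ≤ b)) := by
      intro x hx
      rw [Finset.mem_filter] at hx
      rw [Finset.mem_insert, Finset.mem_filter]
      by_cases hxb : x = b + 1
      · exact Or.inl hxb
      · exact Or.inr ⟨hx.1, hx.2.1, by omega⟩
    exact le_trans (Finset.card_le_card hsub) (Finset.card_insert_le _ _)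
  have hft : f t = 1 := by
    have : T.filter (fun x => t ≤ x ∧ x ≤ t) = {t} := by
      ext x
      rw [Finset.mem_filter, Finset.mem_singleton]
      constructor
      · intro hx; omega
      · rintro rfl; exact ⟨ht, le_refl _, le_refl _⟩
    rw [hf]; simp only []; rw [this, Finset.card_singleton]
  have htn : t < C.n := hT t ht
  have hfB : (T.filter (fun x => t ≤ x)).card ≤ f (C.n - 1) := by
    apply Finset.card_le_card
    intro x hx
    rw [Finset.mem_filter] at hx ⊢
    have := hT x hx.1
    exact ⟨hx.1, hx.2, by omega⟩
  obtain ⟨b, htb, hbB, hfb, hor⟩ := nat_ivt f hstep t (C.n - 1) m (by omega) (by omega) (by omega)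
  refine ⟨b, ?_, htb, hfb⟩
  rcases hor with rfl | ⟨hb1, hlt⟩
  · exact ht
  · by_contra hbT
    have heq : T.filter (fun x => t ≤ x ∧ x ≤ b) = T.filter (fun x => t ≤ x ∧ x ≤ b - 1) := by
      ext x
      rw [Finset.mem_filter, Finset.mem_filter]
      constructor
      · rintro ⟨hx1, hx2, hx3⟩
        have hxb : x ≠ b := fun h => hbT (h ▸ hx1)
        exact ⟨hx1, hx2, by omega⟩
      · rintro ⟨hx1, hx2, hx3⟩
        exact ⟨hx1, hx2, by omega⟩
    rw [hf] at hlt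
    simp only [] at hlt
    rw [heq] at hlt
    omega

lemma window_left {T : Finset ℕ} {t m : ℕ} (ht : t ∈ T)
    (hm : 1 ≤ m) (hml : m ≤ (T.filter (fun x => x ≤ t)).card) :
    ∃ a ∈ T, a ≤ t ∧ (T.filter (fun x => a ≤ x ∧ x ≤ t)).card = m := by
  set g : ℕ → ℕ := fun c => (T.filter (fun x => t - c ≤ x ∧ x ≤ t)).card with hg
  have hstep : ∀ c, g (c + 1) ≤ g c + 1 := by
    intro c
    have hsub : T.filter (fun x => t - (c + 1) ≤ x ∧ x ≤ t)
        ⊆ insert (t - (c + 1)) (T.filter (fun x => t - c ≤ x ∧ x ≤ t)) := by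
      intro x hx
      rw [Finset.mem_filter] at hx
      rw [Finset.mem_insert, Finset.mem_filter]
      by_cases hxb : x = t - (c + 1)
      · exact Or.inl hxb
      · exact Or.inr ⟨hx.1, by omega, hx.2.2⟩
    exact le_trans (Finset.card_le_card hsub) (Finset.card_insert_le _ _)
  have hg0 : g 0 = 1 := by
    have : T.filter (fun x => t - 0 ≤ x ∧ x ≤ t) = {t} := by
      ext x
      rw [Finset.mem_filter, Finset.mem_singleton]
      constructor
      · intro hx; omega
      · rintro rfl; exact ⟨ht, by omega, le_refl _⟩
    rw [hg]; simp only []; rw [this, Finset.card_singleton]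
  have hgt : (T.filter (fun x => x ≤ t)).card ≤ g t := by
    apply Finset.card_le_card
    intro x hx
    rw [Finset.mem_filter] at hx ⊢
    exact ⟨hx.1, by omega, hx.2⟩
  obtain ⟨c, _, hcB, hgc, hor⟩ := nat_ivt g hstep 0 t m (by omega) (by omega) (by omega)
  refine ⟨t - c, ?_, by omega, hgc⟩
  rcases hor with rfl | ⟨_, hlt⟩
  · simpa using ht
  · by_contra haT
    have heq : T.filter (fun x => t - c ≤ x ∧ x ≤ t) = T.filter (fun x => t - (c - 1) ≤ x ∧ x ≤ t) := by
      ext x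
      rw [Finset.mem_filter, Finset.mem_filter]
      constructor
      · rintro ⟨hx1, hx2, hx3⟩
        have hxb : x ≠ t - c := fun h => haT (h ▸ hx1)
        exact ⟨hx1, by omega, hx3⟩
      · rintro ⟨hx1, hx2, hx3⟩
        exact ⟨hx1, by omega, hx3⟩
    rw [hg] at hlt
    simp only [] at hlt
    rw [heq] at hlt
    omega

lemma mem_idealS_iv {S : Finset V} (hS : S ⊆ C.R.simples) {p q : ℕ} (hpq : p ≤ q) (hq : q < C.n) :
    C.iv p q ∈ C.R.idealS S C.th ↔
      (C.TS S).card / 2 + 1 ≤ ((C.TS S).filter (fun x => p ≤ x ∧ x ≤ q)).card := by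
  have h1 := C.degS_theta hS
  have h2 := C.degS_iv hS hpq hq
  constructor
  · rintro ⟨_, hd⟩
    rw [h1, h2] at hd
    omega
  · intro h
    refine ⟨C.iv_posRoot hpq hq, ?_⟩
    rw [h1, h2]
    omega

lemma window_is_min {S : Finset V} (hS : S ⊆ C.R.simples) {a b : ℕ} (hab : a ≤ b) (hb : b < C.n)
    (ha : a ∈ C.TS S) (hbT : b ∈ C.TS S)
    (hcard : ((C.TS S).filter (fun x => a ≤ x ∧ x ≤ b)).card = (C.TS S).card / 2 + 1) :
    C.iv a b ∈ C.R.minSet (C.R.idealS S C.th) := by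
  constructor
  · rw [C.mem_idealS_iv hS hab hb, hcard]
  · intro ν hν hrle
    obtain ⟨p, q, hpq, hq, rfl⟩ := C.pos_classify hν.1
    have hsub := (C.rle_iv hpq hq hab hb).mp hrle
    have hfs : (C.TS S).filter (fun x => p ≤ x ∧ x ≤ q)
        ⊆ (C.TS S).filter (fun x => a ≤ x ∧ x ≤ b) := by
      intro x hx
      rw [Finset.mem_filter] at hx ⊢
      exact ⟨hx.1, by omega⟩
    have hcard2 := (C.mem_idealS_iv hS hpq hq).mp hν
    have heqf : (C.TS S).filter (fun x => p ≤ x ∧ x ≤ q)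
        = (C.TS S).filter (fun x => a ≤ x ∧ x ≤ b) :=
      Finset.eq_of_subset_of_card_le hfs (by omega)
    have hain : a ∈ (C.TS S).filter (fun x => p ≤ x ∧ x ≤ q) := by
      rw [heqf, Finset.mem_filter]
      exact ⟨ha, le_refl a, hab⟩
    have hbin : b ∈ (C.TS S).filter (fun x => p ≤ x ∧ x ≤ q) := by
      rw [heqf, Finset.mem_filter]
      exact ⟨hbT, hab, le_refl b⟩
    rw [Finset.mem_filter] at hain hbin
    have : p = a ∧ q = b := by omega
    rw [this.1, this.2]

lemma sub_normS (S : Finset V) (hS : S ⊆ C.R.simples) :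
    ↑S ⊆ C.R.normS (C.R.idealS S C.th) := by
  intro α hα
  have hαs : α ∈ C.R.simples := hS hα
  have hr : α ∈ Set.range C.e := by rw [← C.hrange]; exact hαs
  obtain ⟨i, rfl⟩ := hr
  have hu : i.1 < C.n := i.2
  have hαE : C.e i = C.E i.1 := (C.E_eq i.1 i.2).symm
  rw [hαE] at hα hαs ⊢
  set t := i.1 with htdef
  have htT : t ∈ C.TS S := by
    rw [TS, Finset.mem_filter, Finset.mem_range]
    exact ⟨hu, hα⟩
  set T := C.TS S with hTdef
  set k := T.card with hkdef
  set m := k / 2 + 1 with hmdef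
  have hk1 : 1 ≤ k := Finset.card_pos.mpr ⟨t, htT⟩
  have hmk : m ≤ k := by omega
  have hTn : ∀ x ∈ T, x < C.n := fun x hx => C.TS_lt hx
  -- l + r = k + 1
  have hlr : (T.filter (fun x => x ≤ t)).card + (T.filter (fun x => t ≤ x)).card = k + 1 := by
    have hu1 : T.filter (fun x => x ≤ t) ∪ T.filter (fun x => t ≤ x) = T := by
      ext x
      simp only [Finset.mem_union, Finset.mem_filter]
      constructor
      · rintro (h | h) <;> exact h.1
      · intro hx
        rcases Nat.le_total x t with h | h
        · exact Or.inl ⟨hx, h⟩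
        · exact Or.inr ⟨hx, h⟩
    have hu2 : T.filter (fun x => x ≤ t) ∩ T.filter (fun x => t ≤ x) = {t} := by
      ext x
      simp only [Finset.mem_inter, Finset.mem_filter, Finset.mem_singleton]
      constructor
      · rintro ⟨⟨_, h1⟩, ⟨_, h2⟩⟩; omega
      · rintro rfl; exact ⟨⟨htT, le_refl t⟩, ⟨htT, le_refl t⟩⟩
    have := Finset.card_union_add_card_inter (T.filter (fun x => x ≤ t))
      (T.filter (fun x => t ≤ x))
    rw [hu1, hu2, Finset.card_singleton] at this
    omega
  rcases le_or_gt m ((T.filter (fun x => t ≤ x)).card) with hcase | hcase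
  · -- window to the right
    obtain ⟨b, hbT, htb, hbcard⟩ := C.window_right hTn htT (by omega) hcase
    have hbn : b < C.n := hTn b hbT
    have hmin := C.window_is_min hS htb hbn htT hbT hbcard
    refine ⟨hαs, C.iv t b, hmin, ?_⟩
    rcases Nat.eq_or_lt_of_le htb with rfl | hlt
    · exact Or.inr (C.iv_self _)
    · exact Or.inl (by rw [C.iv_sub_left hlt]; exact C.iv_posRoot (by omega) hbn)
  · -- window to the left
    have hml : m ≤ (T.filter (fun x => x ≤ t)).card := by omega
    obtain ⟨a, haT, hat, hacard⟩ := window_left htT (by omega) hml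
    have htn : t < C.n := hTn t htT
    have hmin := C.window_is_min hS hat htn haT htT hacard
    refine ⟨hαs, C.iv a t, hmin, ?_⟩
    rcases Nat.eq_or_lt_of_le hat with rfl | hlt
    · exact Or.inr (C.iv_self _)
    · exact Or.inl (by rw [C.iv_sub_right hlt]; exact C.iv_posRoot (by omega) (by omega))

lemma part1 (S : Finset V) (hS : S ⊆ C.R.simples) :
    C.R.IsAbelianIdeal (C.R.idealS S C.th) ∧ C.R.normS (C.R.idealS S C.th) = ↑S :=
  ⟨C.idealS_abelian S hS, Set.Subset.antisymm (C.normS_sub S hS) (C.sub_normS S hS)⟩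

end TypeACtx
namespace TypeACtx
open Finset
open scoped Classical

variable {V : Type} [NormedAddCommGroup V] [InnerProductSpace ℝ V] [FiniteDimensional ℝ V]
variable (C : TypeACtx V)

lemma rle_refl (γ : V) : C.R.rle γ γ :=
  ⟨fun _ => 0, by simp⟩

lemma rle_trans {μ ν ξ : V} (hμ : μ ∈ C.R.roots) (hν : ν ∈ C.R.roots) (hξ : ξ ∈ C.R.roots)
    (h1 : C.R.rle μ ν) (h2 : C.R.rle ν ξ) : C.R.rle μ ξ := by
  rw [C.rle_coords hμ hν] at h1
  rw [C.rle_coords hν hξ] at h2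
  rw [C.rle_coords hμ hξ]
  intro k hk
  exact le_trans (h1 k hk) (h2 k hk)

lemma exists_min {I : Set V} (hIpos : I ⊆ C.R.posRoots) :
    ∀ γ ∈ I, ∃ μ ∈ C.R.minSet I, C.R.rle μ γ := by
  suffices h : ∀ d : ℕ, ∀ p q : ℕ, p ≤ q → q < C.n → q - p ≤ d → C.iv p q ∈ I →
      ∃ μ ∈ C.R.minSet I, C.R.rle μ (C.iv p q) by
    intro γ hγ
    obtain ⟨p, q, hpq, hq, rfl⟩ := C.pos_classify (hIpos hγ)
    exact h (q - p) p q hpq hq (le_refl _) hγ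
  intro d
  induction d with
  | zero =>
    intro p q hpq hq hd hmem
    have hqp : q = p := by omega
    subst hqp
    refine ⟨C.iv q q, ⟨hmem, ?_⟩, C.rle_refl _⟩
    intro ν hν hrle
    obtain ⟨p', q', hpq', hq', rfl⟩ := C.pos_classify (hIpos hν)
    have := (C.rle_iv hpq' hq' hpq hq).mp hrle
    have hq'' : p' = q ∧ q' = q := by omega
    rw [hq''.1, hq''.2]
  | succ d ih =>
    intro p q hpq hq hd hmem
    by_cases hmin : ∀ ν ∈ I, C.R.rle ν (C.iv p q) → ν = C.iv p q
    · exact ⟨C.iv p q, ⟨hmem, hmin⟩, C.rle_refl _⟩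
    · push_neg at hmin
      obtain ⟨ν, hν, hrle, hne⟩ := hmin
      obtain ⟨p', q', hpq', hq', rfl⟩ := C.pos_classify (hIpos hν)
      have hb := (C.rle_iv hpq' hq' hpq hq).mp hrle
      have hpairne : ¬(p' = p ∧ q' = q) := by
        rintro ⟨rfl, rfl⟩
        exact hne rfl
      have hdle : q' - p' ≤ d := by omega
      obtain ⟨μ, hμ, hrle2⟩ := ih p' q' hpq' hq' hdle hν
      refine ⟨μ, hμ, C.rle_trans ?_ ?_ ?_ hrle2 hrle⟩
      · exact (hIpos hμ.1).1
      · exact (hIpos hν).1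
      · exact (C.iv_root hpq hq)

lemma overlap {I : Set V} (hI : C.R.IsAbelianIdeal I) {p q p' q' : ℕ}
    (hpq : p ≤ q) (hq : q < C.n) (hpq' : p' ≤ q') (hq' : q' < C.n)
    (h1 : C.iv p q ∈ I) (h2 : C.iv p' q' ∈ I) : p' ≤ q := by
  by_contra h
  push_neg at h
  have hmem : C.iv p (p' - 1) ∈ I := by
    refine hI.1.2 _ h1 _ (C.iv_posRoot (by omega) (by omega)) ?_
    exact (C.rle_iv hpq hq (by omega) (by omega)).mpr ⟨le_refl p, by omega⟩
  have hsum : C.iv p (p' - 1) + C.iv p' q' ∈ C.R.roots :=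
    (C.sum_iv_iff (by omega) (by omega) hpq' hq').mpr (Or.inl (by omega))
  exact hI.2 _ hmem _ h2 hsum

lemma min_antichain {I : Set V} {p q p' q' : ℕ}
    (hpq : p ≤ q) (hq : q < C.n) (hpq' : p' ≤ q') (hq' : q' < C.n)
    (h1 : C.iv p q ∈ C.R.minSet I) (h2 : C.iv p' q' ∈ I)
    (hle : p ≤ p') (hle2 : q' ≤ q) : p = p' ∧ q = q' := by
  have heq := h1.2 _ h2 ((C.rle_iv hpq' hq' hpq hq).mpr ⟨hle, hle2⟩)
  have := C.iv_inj hpq' hq' hpq hq heq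
  omega

lemma card_filter_image_fst_ge (Pm : Finset (ℕ × ℕ))
    (hinj : ∀ pq ∈ Pm, ∀ pq' ∈ Pm, pq.1 = pq'.1 → pq = pq') (a : ℕ) :
    ((Pm.image Prod.fst).filter (fun x => a ≤ x)).card
      = (Pm.filter (fun r => a ≤ r.1)).card := by
  rw [Finset.filter_image]
  exact Finset.card_image_of_injOn (fun x hx y hy h => hinj x (Finset.mem_of_mem_filter x hx)
    y (Finset.mem_of_mem_filter y hy) h)

lemma card_filter_image_snd_le (Pm : Finset (ℕ × ℕ))
    (hinj : ∀ pq ∈ Pm, ∀ pq' ∈ Pm, pq.2 = pq'.2 → pq = pq') (b : ℕ) :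
    ((Pm.image Prod.snd).filter (fun x => x ≤ b)).card
      = (Pm.filter (fun r => r.2 ≤ b)).card := by
  rw [Finset.filter_image]
  exact Finset.card_image_of_injOn (fun x hx y hy h => hinj x (Finset.mem_of_mem_filter x hx)
    y (Finset.mem_of_mem_filter y hy) h)

end TypeACtx
namespace TypeACtx
open Finset
open scoped Classical

variable {V : Type} [NormedAddCommGroup V] [InnerProductSpace ℝ V] [FiniteDimensional ℝ V]
variable (C : TypeACtx V)

lemma part2 (I : Set V) (hI : C.R.IsAbelianIdeal I) (S : Finset V)
    (hSn : (↑S : Set V) = C.R.normS I) : C.R.idealS S C.th = I := by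
  have hS : S ⊆ C.R.simples := by
    intro α hα
    have : α ∈ C.R.normS I := by rw [← hSn]; exact hα
    exact this.1
  by_cases hIe : I = ∅
  · subst hIe
    have hmin : C.R.minSet (∅ : Set V) = ∅ := by
      ext γ
      simp [RootSystemData.minSet]
    have hnorm : C.R.normS (∅ : Set V) = ∅ := by
      ext α
      simp [RootSystemData.normS, hmin]
    rw [hnorm] at hSn
    have hSe : S = ∅ := by
      rwa [Finset.coe_eq_empty] at hSn
    subst hSe
    ext γ
    simp only [RootSystemData.idealS, Set.mem_setOf_eq, Set.mem_empty_iff_false, iff_false]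
    rintro ⟨_, hd⟩
    simp [RootSystemData.degS] at hd
  · obtain ⟨γ₀, hγ₀⟩ := Set.nonempty_iff_ne_empty.mpr hIe
    have hIpos : I ⊆ C.R.posRoots := hI.1.1
    set Pm : Finset (ℕ × ℕ) := (Finset.range C.n ×ˢ Finset.range C.n).filter
      (fun pq => pq.1 ≤ pq.2 ∧ C.iv pq.1 pq.2 ∈ C.R.minSet I) with hPmdef
    have hPmem : ∀ pq : ℕ × ℕ,
        pq ∈ Pm ↔ pq.1 ≤ pq.2 ∧ pq.2 < C.n ∧ C.iv pq.1 pq.2 ∈ C.R.minSet I := by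
      intro pq
      simp only [hPmdef, Finset.mem_filter, Finset.mem_product, Finset.mem_range]
      constructor
      · rintro ⟨⟨h1, h2⟩, h3, h4⟩; exact ⟨h3, h2, h4⟩
      · rintro ⟨h1, h2, h3⟩; exact ⟨⟨by omega, h2⟩, h1, h3⟩
    have hminchar : ∀ γ ∈ C.R.minSet I, ∃ pq ∈ Pm, γ = C.iv pq.1 pq.2 := by
      intro γ hγ
      obtain ⟨p, q, hpq, hq, rfl⟩ := C.pos_classify (hIpos hγ.1)
      exact ⟨(p, q), (hPmem (p, q)).mpr ⟨hpq, hq, hγ⟩, rfl⟩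
    have hAB : ∀ pq ∈ Pm, ∀ pq' ∈ Pm, pq.1 ≤ pq'.2 := by
      intro pq h pq' h'
      obtain ⟨h1, h2, h3⟩ := (hPmem pq).mp h
      obtain ⟨h1', h2', h3'⟩ := (hPmem pq').mp h'
      exact C.overlap hI h1' h2' h1 h2 h3'.1 h3.1
    have hmono : ∀ pq ∈ Pm, ∀ pq' ∈ Pm, pq.1 ≤ pq'.1 → pq.2 ≤ pq'.2 := by
      intro pq h pq' h' hle
      by_contra hgt
      push_neg at hgt
      obtain ⟨h1, h2, h3⟩ := (hPmem pq).mp h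
      obtain ⟨h1', h2', h3'⟩ := (hPmem pq').mp h'
      have := C.min_antichain h1 h2 h1' h2' h3 h3'.1 hle (by omega)
      omega
    have hmono2 : ∀ pq ∈ Pm, ∀ pq' ∈ Pm, pq.2 ≤ pq'.2 → pq.1 ≤ pq'.1 := by
      intro pq h pq' h' hle
      by_contra hgt
      push_neg at hgt
      obtain ⟨h1, h2, h3⟩ := (hPmem pq).mp h
      obtain ⟨h1', h2', h3'⟩ := (hPmem pq').mp h'
      have := C.min_antichain h1' h2' h1 h2 h3' h3.1 (by omega) hle
      omega
    have hfst_inj : ∀ pq ∈ Pm, ∀ pq' ∈ Pm, pq.1 = pq'.1 → pq = pq' := by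
      intro pq h pq' h' heq
      have h1 := hmono pq h pq' h' (le_of_eq heq)
      have h2 := hmono pq' h' pq h (le_of_eq heq.symm)
      exact Prod.ext heq (by omega)
    have hsnd_inj : ∀ pq ∈ Pm, ∀ pq' ∈ Pm, pq.2 = pq'.2 → pq = pq' := by
      intro pq h pq' h' heq
      have h1 := hmono2 pq h pq' h' (le_of_eq heq)
      have h2 := hmono2 pq' h' pq h (le_of_eq heq.symm)
      exact Prod.ext (by omega) heq
    set AF := Pm.image Prod.fst with hAFdef
    set BF := Pm.image Prod.snd with hBFdef
    set TF := AF ∪ BF with hTFdef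
    set t := Pm.card with htdef
    have hAFcard : AF.card = t :=
      Finset.card_image_of_injOn (fun a ha b hb h => hfst_inj a ha b hb h)
    have hBFcard : BF.card = t :=
      Finset.card_image_of_injOn (fun a ha b hb h => hsnd_inj a ha b hb h)
    have hABle : ∀ a ∈ AF, ∀ b ∈ BF, a ≤ b := by
      intro a ha b hb
      obtain ⟨pq, hpq, rfl⟩ := Finset.mem_image.mp ha
      obtain ⟨pq', hpq', rfl⟩ := Finset.mem_image.mp hb
      exact hAB pq hpq pq' hpq'
    set s := (AF ∩ BF).card with hsdef
    have hABinter : s ≤ 1 := by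
      rw [hsdef]
      apply Finset.card_le_one.mpr
      intro a ha b hb
      rw [Finset.mem_inter] at ha hb
      exact le_antisymm (hABle a ha.1 b hb.2) (hABle b hb.1 a ha.2)
    have ht1 : 1 ≤ t := by
      obtain ⟨μ, hμ, _⟩ := C.exists_min hIpos γ₀ hγ₀
      obtain ⟨pq, hpqm, _⟩ := hminchar μ hμ
      rw [htdef]
      exact Finset.card_pos.mpr ⟨pq, hpqm⟩
    have hTFcard : TF.card + s = 2 * t := by
      have := Finset.card_union_add_card_inter AF BF
      rw [← hTFdef, ← hsdef] at this
      omega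
    -- TS S = TF
    have hTS : C.TS S = TF := by
      ext u
      rw [TS, Finset.mem_filter, Finset.mem_range]
      constructor
      · rintro ⟨hun, huS⟩
        have hnorm : C.E u ∈ C.R.normS I := by
          rw [← hSn]; exact huS
        obtain ⟨hsimp, γ, hγmin, hcase⟩ := hnorm
        obtain ⟨pq, hpqm, rfl⟩ := hminchar γ hγmin
        obtain ⟨hle, hlt, hmin⟩ := (hPmem pq).mp hpqm
        rcases hcase with hsub | hEq
        · have hh := (C.sub_pos_iff hle hlt hun).mp hsub
          rcases hh.2 with rfl | rfl
          · exact Finset.mem_union_left _ (Finset.mem_image_of_mem _ hpqm)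
          · exact Finset.mem_union_right _ (Finset.mem_image_of_mem _ hpqm)
        · have heq2 : C.iv pq.1 pq.2 = C.iv u u := by rw [hEq, iv_self]
          have := C.iv_inj hle hlt (le_refl u) hun heq2
          have hu1 : pq.1 = u := this.1
          rw [← hu1]
          exact Finset.mem_union_left _ (Finset.mem_image_of_mem _ hpqm)
      · intro hu
        rcases Finset.mem_union.mp hu with hA | hB
        · obtain ⟨pq, hpqm, rfl⟩ := Finset.mem_image.mp hA
          obtain ⟨hle, hlt, hmin⟩ := (hPmem pq).mp hpqm
          have hun : pq.1 < C.n := by omega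
          refine ⟨hun, ?_⟩
          have hmem : C.E pq.1 ∈ C.R.normS I := by
            refine ⟨C.E_mem_simples hun, C.iv pq.1 pq.2, hmin, ?_⟩
            rcases eq_or_lt_of_le hle with heq | hlt2
            · right; rw [← heq, iv_self]
            · left; rw [C.iv_sub_left hlt2]; exact C.iv_posRoot (by omega) hlt
          rw [← hSn] at hmem
          exact hmem
        · obtain ⟨pq, hpqm, rfl⟩ := Finset.mem_image.mp hB
          obtain ⟨hle, hlt, hmin⟩ := (hPmem pq).mp hpqm
          refine ⟨hlt, ?_⟩
          have hmem : C.E pq.2 ∈ C.R.normS I := by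
            refine ⟨C.E_mem_simples hlt, C.iv pq.1 pq.2, hmin, ?_⟩
            rcases eq_or_lt_of_le hle with heq | hlt2
            · right; rw [← heq, iv_self, heq]
            · left; rw [C.iv_sub_right hlt2]; exact C.iv_posRoot (by omega) (by omega)
          rw [← hSn] at hmem
          exact hmem
    have hAcard_eq : ∀ a : ℕ, (AF.filter (fun x => a ≤ x)).card
        = (Pm.filter (fun r => a ≤ r.1)).card := by
      intro a
      rw [hAFdef]
      exact card_filter_image_fst_ge Pm hfst_inj a
    have hBcard_eq : ∀ b : ℕ, (BF.filter (fun x => x ≤ b)).card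
        = (Pm.filter (fun r => r.2 ≤ b)).card := by
      intro b
      rw [hBFdef]
      exact card_filter_image_snd_le Pm hsnd_inj b
    -- partition count for b ∈ BF coming from pq ∈ Pm
    have hpart : ∀ pq ∈ Pm, (Pm.filter (fun r => pq.2 ≤ r.2)).card
        + (Pm.filter (fun r => r.2 ≤ pq.2)).card = t + 1 := by
      intro pq hpqm
      have hun : Pm.filter (fun r => pq.2 ≤ r.2) ∪ Pm.filter (fun r => r.2 ≤ pq.2) = Pm := by
        ext r
        simp only [Finset.mem_union, Finset.mem_filter]
        constructor
        · rintro (h | h) <;> exact h.1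
        · intro hr
          rcases Nat.le_total pq.2 r.2 with h | h
          · exact Or.inl ⟨hr, h⟩
          · exact Or.inr ⟨hr, h⟩
      have hin : Pm.filter (fun r => pq.2 ≤ r.2) ∩ Pm.filter (fun r => r.2 ≤ pq.2) = {pq} := by
        ext r
        simp only [Finset.mem_inter, Finset.mem_filter, Finset.mem_singleton]
        constructor
        · rintro ⟨⟨hr, h1⟩, ⟨_, h2⟩⟩
          exact hsnd_inj r hr pq hpqm (by omega)
        · rintro rfl
          exact ⟨⟨hpqm, le_refl _⟩, ⟨hpqm, le_refl _⟩⟩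
      have := Finset.card_union_add_card_inter (Pm.filter (fun r => pq.2 ≤ r.2))
        (Pm.filter (fun r => r.2 ≤ pq.2))
      rw [hun, hin, Finset.card_singleton] at this
      omega
    -- the main counting identity for windows of minimal roots
    have hcount : ∀ pq ∈ Pm,
        (TF.filter (fun x => pq.1 ≤ x ∧ x ≤ pq.2)).card + s = t + 1 := by
      intro pq hpqm
      have haA : pq.1 ∈ AF := Finset.mem_image_of_mem _ hpqm
      have hbB : pq.2 ∈ BF := Finset.mem_image_of_mem _ hpqm
      have hAf : AF.filter (fun x => pq.1 ≤ x ∧ x ≤ pq.2) = AF.filter (fun x => pq.1 ≤ x) := by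
        apply Finset.filter_congr
        intro x hx
        have := hABle x hx pq.2 hbB
        constructor
        · rintro ⟨h, _⟩; exact h
        · intro h; exact ⟨h, this⟩
      have hBf : BF.filter (fun x => pq.1 ≤ x ∧ x ≤ pq.2) = BF.filter (fun x => x ≤ pq.2) := by
        apply Finset.filter_congr
        intro x hx
        have := hABle pq.1 haA x hx
        constructor
        · rintro ⟨_, h⟩; exact h
        · intro h; exact ⟨this, h⟩
      have hswitch : Pm.filter (fun r => pq.1 ≤ r.1) = Pm.filter (fun r => pq.2 ≤ r.2) := by
        apply Finset.filter_congr
        intro r hr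
        exact ⟨fun h => hmono pq hpqm r hr h, fun h => hmono2 pq hpqm r hr h⟩
      have hABf : (AF.filter (fun x => pq.1 ≤ x ∧ x ≤ pq.2))
          ∩ (BF.filter (fun x => pq.1 ≤ x ∧ x ≤ pq.2)) = AF ∩ BF := by
        ext x
        simp only [Finset.mem_inter, Finset.mem_filter]
        constructor
        · rintro ⟨⟨h1, _⟩, ⟨h2, _⟩⟩; exact ⟨h1, h2⟩
        · rintro ⟨h1, h2⟩
          exact ⟨⟨h1, hABle pq.1 haA x h2, hABle x h1 pq.2 hbB⟩,
            ⟨h2, hABle pq.1 haA x h2, hABle x h1 pq.2 hbB⟩⟩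
      have hfu : TF.filter (fun x => pq.1 ≤ x ∧ x ≤ pq.2)
          = AF.filter (fun x => pq.1 ≤ x ∧ x ≤ pq.2)
            ∪ BF.filter (fun x => pq.1 ≤ x ∧ x ≤ pq.2) := by
        rw [hTFdef, Finset.filter_union]
      have hcu := Finset.card_union_add_card_inter
        (AF.filter (fun x => pq.1 ≤ x ∧ x ≤ pq.2)) (BF.filter (fun x => pq.1 ≤ x ∧ x ≤ pq.2))
      rw [hABf, ← hfu, ← hsdef] at hcu
      have e1 : (AF.filter (fun x => pq.1 ≤ x ∧ x ≤ pq.2)).card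
          = (Pm.filter (fun r => pq.2 ≤ r.2)).card := by
        rw [hAf, hAcard_eq pq.1, hswitch]
      have e2 : (BF.filter (fun x => pq.1 ≤ x ∧ x ≤ pq.2)).card
          = (Pm.filter (fun r => r.2 ≤ pq.2)).card := by
        rw [hBf, hBcard_eq pq.2]
      have e3 := hpart pq hpqm
      omega
    have hkm : (C.TS S).card + s = 2 * t := by rw [hTS]; exact hTFcard
    -- final equality
    ext γ
    constructor
    · rintro hγid
      obtain ⟨p, q, hpq, hq, rfl⟩ := C.pos_classify hγid.1
      have hcnt := (C.mem_idealS_iv hS hpq hq).mp hγid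
      rw [hTS] at hcnt
      -- find a minimal window inside [p,q]
      have hex : ∃ pq ∈ Pm, p ≤ pq.1 ∧ pq.2 ≤ q := by
        have hABf' : (AF.filter (fun x => p ≤ x ∧ x ≤ q))
            ∩ (BF.filter (fun x => p ≤ x ∧ x ≤ q)) = (AF ∩ BF).filter (fun x => p ≤ x ∧ x ≤ q) := by
          ext x
          simp only [Finset.mem_inter, Finset.mem_filter]
          tauto
        have hfu : TF.filter (fun x => p ≤ x ∧ x ≤ q)
            = AF.filter (fun x => p ≤ x ∧ x ≤ q) ∪ BF.filter (fun x => p ≤ x ∧ x ≤ q) := by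
          rw [hTFdef, Finset.filter_union]
        have hcu := Finset.card_union_add_card_inter
          (AF.filter (fun x => p ≤ x ∧ x ≤ q)) (BF.filter (fun x => p ≤ x ∧ x ≤ q))
        rw [hABf', ← hfu] at hcu
        have hkey : (AF.filter (fun x => p ≤ x ∧ x ≤ q)).card
            + (BF.filter (fun x => p ≤ x ∧ x ≤ q)).card ≥ t + 1 := by
          by_cases hss : ((AF ∩ BF).filter (fun x => p ≤ x ∧ x ≤ q)).card = s
          · omega
          · -- s = 1 and the common point is outside [p,q]
            have hsle : ((AF ∩ BF).filter (fun x => p ≤ x ∧ x ≤ q)).card ≤ s :=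
              Finset.card_le_card (Finset.filter_subset _ _)
            have hs1 : s = 1 := by omega
            have hs0 : ((AF ∩ BF).filter (fun x => p ≤ x ∧ x ≤ q)).card = 0 := by omega
            obtain ⟨c, hc⟩ := Finset.card_eq_one.mp (by rw [← hsdef]; exact hs1 :
              (AF ∩ BF).card = 1)
            have hcmem : c ∈ AF ∩ BF := by rw [hc]; exact Finset.mem_singleton_self c
            have hcP : ¬(p ≤ c ∧ c ≤ q) := by
              intro hP
              have : c ∈ (AF ∩ BF).filter (fun x => p ≤ x ∧ x ≤ q) :=
                Finset.mem_filter.mpr ⟨hcmem, hP⟩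
              rw [Finset.card_eq_zero] at hs0
              rw [hs0] at this
              exact absurd this (Finset.notMem_empty c)
            rw [Finset.mem_inter] at hcmem
            rcases Nat.lt_or_ge c p with hcp | hcp
            · -- c < p : AF-side filter is empty
              have hAe : AF.filter (fun x => p ≤ x ∧ x ≤ q) = ∅ := by
                rw [Finset.filter_eq_empty_iff]
                intro x hx
                have := hABle x hx c hcmem.2
                omega
              have hBfull : BF.filter (fun x => p ≤ x ∧ x ≤ q) = BF := by
                apply Finset.eq_of_subset_of_card_le (Finset.filter_subset _ _)
                rw [hAe] at hcu
                rw [Finset.card_empty] at hcu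
                omega
              exfalso
              have : c ∈ BF.filter (fun x => p ≤ x ∧ x ≤ q) := by
                rw [hBfull]; exact hcmem.2
              rw [Finset.mem_filter] at this
              exact hcP this.2
            · have hqc : q < c := by omega
              have hBe : BF.filter (fun x => p ≤ x ∧ x ≤ q) = ∅ := by
                rw [Finset.filter_eq_empty_iff]
                intro x hx
                have := hABle c hcmem.1 x hx
                omega
              have hAfull : AF.filter (fun x => p ≤ x ∧ x ≤ q) = AF := by
                apply Finset.eq_of_subset_of_card_le (Finset.filter_subset _ _)
                rw [hBe] at hcu
                rw [Finset.card_empty] at hcu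
                omega
              exfalso
              have : c ∈ AF.filter (fun x => p ≤ x ∧ x ≤ q) := by
                rw [hAfull]; exact hcmem.1
              rw [Finset.mem_filter] at this
              exact hcP this.2
        -- now transfer to Pm filters and intersect
        have e1 : (AF.filter (fun x => p ≤ x ∧ x ≤ q)).card
            ≤ (Pm.filter (fun r => p ≤ r.1)).card := by
          rw [← hAcard_eq p]
          apply Finset.card_le_card
          intro x hx
          rw [Finset.mem_filter] at hx ⊢
          exact ⟨hx.1, hx.2.1⟩
        have e2 : (BF.filter (fun x => p ≤ x ∧ x ≤ q)).card
            ≤ (Pm.filter (fun r => r.2 ≤ q)).card := by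
          rw [← hBcard_eq q]
          apply Finset.card_le_card
          intro x hx
          rw [Finset.mem_filter] at hx ⊢
          exact ⟨hx.1, hx.2.2⟩
        have hcu2 := Finset.card_union_add_card_inter
          (Pm.filter (fun r => p ≤ r.1)) (Pm.filter (fun r => r.2 ≤ q))
        have hcle : (Pm.filter (fun r => p ≤ r.1) ∪ Pm.filter (fun r => r.2 ≤ q)).card ≤ t := by
          rw [htdef]
          apply Finset.card_le_card
          exact Finset.union_subset (Finset.filter_subset _ _) (Finset.filter_subset _ _)
        have hsum12 : t + 1 ≤ (Pm.filter (fun r => p ≤ r.1)).card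
            + (Pm.filter (fun r => r.2 ≤ q)).card :=
          le_trans hkey (add_le_add e1 e2)
        have hipos : 1 ≤ (Pm.filter (fun r => p ≤ r.1) ∩ Pm.filter (fun r => r.2 ≤ q)).card := by
          omega
        obtain ⟨pq, hpqin⟩ := Finset.card_pos.mp
          (show 0 < (Pm.filter (fun r => p ≤ r.1) ∩ Pm.filter (fun r => r.2 ≤ q)).card by omega)
        rw [Finset.mem_inter] at hpqin
        have h1 := hpqin.1
        have h2 := hpqin.2
        rw [Finset.mem_filter] at h1
        rw [Finset.mem_filter] at h2
        exact ⟨pq, h1.1, h1.2, h2.2⟩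
      obtain ⟨pq, hpqm, hp1, hp2⟩ := hex
      obtain ⟨hle, hlt, hmin⟩ := (hPmem pq).mp hpqm
      refine hI.1.2 _ hmin.1 _ (C.iv_posRoot hpq hq) ?_
      exact (C.rle_iv hle hlt hpq hq).mpr ⟨hp1, hp2⟩
    · intro hγI
      obtain ⟨p, q, hpq, hq, rfl⟩ := C.pos_classify (hIpos hγI)
      obtain ⟨μ, hμ, hrle⟩ := C.exists_min hIpos _ hγI
      obtain ⟨pq, hpqm, rfl⟩ := hminchar μ hμ
      obtain ⟨hle, hlt, hmin⟩ := (hPmem pq).mp hpqm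
      have hb := (C.rle_iv hle hlt hpq hq).mp hrle
      have hsubf : TF.filter (fun x => pq.1 ≤ x ∧ x ≤ pq.2)
          ⊆ TF.filter (fun x => p ≤ x ∧ x ≤ q) := by
        intro x hx
        rw [Finset.mem_filter] at hx ⊢
        exact ⟨hx.1, by omega⟩
      have hcge := Finset.card_le_card hsubf
      have hcnt := hcount pq hpqm
      rw [C.mem_idealS_iv hS hpq hq, hTS]
      omega

end TypeACtx

/-- Theorem 4.4(i), type `A_n`: if `Δ` is of type `A_n` (characterised as
an irreducible simply-laced root system whose Dynkin diagram is a path `α_1 — ⋯ — α_n`),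
then `S ↦ I_S` is a bijection from subsets of `Π` onto the abelian upper ideals, with
inverse `I ↦ S(I)`. -/
theorem stmt14 {V : Type} [NormedAddCommGroup V] [InnerProductSpace ℝ V] [FiniteDimensional ℝ V]
    (R : RootSystemData V) (θ : V) (hθ : R.IsHighest θ)
    (n : ℕ) (hn : 1 ≤ n) (e : Fin n → V) (he : Function.Injective e)
    (hrange : (↑R.simples : Set V) = Set.range e)
    (hadj : ∀ i j : Fin n, i ≠ j → (⟪e i, e j⟫_ℝ ≠ 0 ↔ ((i : ℕ) + 1 = j ∨ (j : ℕ) + 1 = i)))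
    (hlaced : ∀ γ ∈ R.roots, ∀ γ' ∈ R.roots, ‖γ‖ = ‖γ'‖) :
    (∀ S : Finset V, S ⊆ R.simples →
        R.IsAbelianIdeal (R.idealS S θ) ∧ R.normS (R.idealS S θ) = ↑S)
      ∧ (∀ I : Set V, R.IsAbelianIdeal I →
          ∀ S : Finset V, (↑S : Set V) = R.normS I → R.idealS S θ = I) := by
  exact ⟨fun S hS => TypeACtx.part1 ⟨R, θ, hθ, n, hn, e, he, hrange, hadj, hlaced⟩ S hS,
    fun I hI S hSn => TypeACtx.part2 ⟨R, θ, hθ, n, hn, e, he, hrange, hadj, hlaced⟩ I hI S hSn⟩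
end
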